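/- arXiv:2506.14011 — 6 statements merged into one kernel-verified Lean document; each statement's English description precedes it below -/
import Mathlib

section
/- There exists a constant C > 0 such that for every n ≥ 2 the complete balanced bipartite graph K_{n,n} admits a family F of subgraphs, each isomorphic to a balanced complete bipartite graph K_{m,m} for some m ≥ 1, such that F strongly separates the edges of K_{n,n} and |F| ≤ C·log n. -/
open SimpleGraph

/-- The family `F` of subgraphs of `G` strongly separates the edges of `G`. -/
def StronglySeparatesEdges {V : Type*} (G : SimpleGraph V) (F : Set G.Subgraph) : Prop :=
  ∀ e ∈ G.edgeSet, ∀ e' ∈ G.edgeSet, e ≠ e' → ∃ A ∈ F, e ∈ A.edgeSet ∧ e' ∉ A.edgeSet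

/-!
Rows are separated by `O(log n)` sets `S ⊆ Fin n` with `n < 4 |S|`: the classes of the binary
digits below the top one, plus two sets for the top digit. Since `n < 4 |S|`, four runs `I` of
`|S|` consecutive elements cover `Fin n`, and the rectangles `S × I` and `I × S` are balanced
complete bipartite subgraphs. If two edges `uv`, `u'v'` differ in the row, a set `S` containing
`u` but not `u'` and a run `I ∋ v` give a rectangle `S × I` containing `uv` but not `u'v'`;
columns are symmetric.
-/

open Finset

namespace SimpleGraph

variable {V W : Type*}

def rectangle (S : Set V) (T : Set W) : (completeBipartiteGraph V W).Subgraph :=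
  (⊤ : (completeBipartiteGraph V W).Subgraph).induce
    (Set.range (Sum.map ((↑) : S → V) ((↑) : T → W)))

theorem mem_edgeSet_rectangle {S : Set V} {T : Set W} {u : V} {v : W} :
    s(Sum.inl u, Sum.inr v) ∈ (rectangle S T).edgeSet ↔ u ∈ S ∧ v ∈ T := by
  simp [rectangle]

noncomputable def rectangleIso (S : Set V) (T : Set W) :
    completeBipartiteGraph S T ≃g (rectangle S T).coe where
  toEquiv := Equiv.ofInjective _
    (Sum.map_injective.2 ⟨Subtype.val_injective, Subtype.val_injective⟩)
  map_rel_iff' {a b} := by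
    change (rectangle S T).Adj (Sum.map _ _ a) (Sum.map _ _ b) ↔ _
    cases a <;> cases b <;> simp [rectangle]

theorem nonempty_iso_rectangle {S : Finset V} {T : Finset W} {m : ℕ} (hS : #S = m)
    (hT : #T = m) :
    Nonempty ((rectangle (S : Set V) (T : Set W)).coe ≃g
      completeBipartiteGraph (Fin m) (Fin m)) :=
  ⟨(rectangleIso _ _).symm.trans
    (completeBipartiteGraphCongr (S.equivFinOfCardEq hS) (T.equivFinOfCardEq hT))⟩

theorem stronglySeparatesEdges_range_rectangle {ι : Type*} (S : ι → Set V) (T : ι → Set W)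
    (hS : ∀ u u' v, u ≠ u' → ∃ q, u ∈ S q ∧ u' ∉ S q ∧ v ∈ T q)
    (hT : ∀ u v v', v ≠ v' → ∃ q, u ∈ S q ∧ v ∈ T q ∧ v' ∉ T q) :
    StronglySeparatesEdges (completeBipartiteGraph V W)
      (Set.range fun q => rectangle (S q) (T q)) := by
  intro e he e' he' hne
  rw [edgeSet_completeBipartiteGraph] at he he'
  obtain ⟨⟨u, v⟩, rfl⟩ := he
  obtain ⟨⟨u', v'⟩, rfl⟩ := he'
  by_cases hu : u = u'
  · subst hu
    obtain ⟨q, hu, hv, hv'⟩ := hT u v v' fun hv => hne (by rw [hv])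
    exact ⟨_, ⟨q, rfl⟩, mem_edgeSet_rectangle.2 ⟨hu, hv⟩,
      fun h => hv' (mem_edgeSet_rectangle.1 h).2⟩
  · obtain ⟨q, hu, hu', hv⟩ := hS u u' v hu
    exact ⟨_, ⟨q, rfl⟩, mem_edgeSet_rectangle.2 ⟨hu, hv⟩,
      fun h => hu' (mem_edgeSet_rectangle.1 h).1⟩

end SimpleGraph

namespace Fin

variable {n : ℕ}

/-- The `j`-th run of `s` consecutive elements of `Fin n`, moved left to end at `n` if it would
overflow. -/
def block (n s j : ℕ) : Finset (Fin n) :=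
  {x | min (j * s) (n - s) ≤ (x : ℕ) ∧ (x : ℕ) < min (j * s) (n - s) + s}

theorem card_block {s : ℕ} (hs : s ≤ n) (j : ℕ) : #(block n s j) = s := by
  set a := min (j * s) (n - s)
  have ha : a + s ≤ n := by omega
  have : block n s j = (Ico a (a + s)).attachFin fun m hm => by simp at hm; omega := by
    ext; simp [block, a]
  rw [this, card_attachFin, Nat.card_Ico, Nat.add_sub_cancel_left]

theorem mem_block_div {s : ℕ} (hs : 0 < s) (x : Fin n) : x ∈ block n s (x / s) := by
  have h₁ := Nat.div_mul_le_self x s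
  have h₂ := Nat.lt_div_mul_add (a := x) hs
  simp only [block, mem_filter, mem_univ, true_and]
  omega

def bitClass (n i : ℕ) (b : Bool) : Finset (Fin n) :=
  {x | (x : ℕ).testBit i = b}

theorem mul_div_le_card_bitClass (i : ℕ) (b : Bool) :
    2 ^ i * (n / 2 ^ (i + 1)) ≤ #(bitClass n i b) := by
  set P := 2 ^ i
  set q := n / 2 ^ (i + 1)
  have hP : 0 < P := by positivity
  have hqn : P * (2 * q) ≤ n := by
    have : q * (P * 2) ≤ n := pow_succ 2 i ▸ Nat.div_mul_le_self n _
    linarith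
  let g : Fin q × Fin P → {x : Fin n // (x : ℕ).testBit i = b} := fun kr =>
    ⟨⟨kr.2 + P * (2 * kr.1 + b.toNat), by
        have := Nat.mul_le_mul_left P
          (show 2 * kr.1 + b.toNat + 1 ≤ 2 * q by have := b.toNat_le; omega)
        rw [Nat.mul_add, mul_one] at this
        omega⟩, by
      show (kr.2 + P * (2 * kr.1 + b.toNat) : ℕ).testBit i = b
      rw [add_comm, Nat.testBit_two_pow_mul_add _ kr.2.isLt]
      cases b <;> simp [Nat.testBit_zero]⟩
  have hg : Function.Injective g := by
    rintro ⟨k, r⟩ ⟨k', r'⟩ h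
    have h : (r : ℕ) + P * (2 * k + b.toNat) = r' + P * (2 * k' + b.toNat) :=
      congrArg (fun x : {x : Fin n // (x : ℕ).testBit i = b} => (x.1 : ℕ)) h
    have hr : (r : ℕ) = r' := by
      simpa [Nat.add_mul_mod_self_left, Nat.mod_eq_of_lt r.isLt, Nat.mod_eq_of_lt r'.isLt]
        using congrArg (· % P) h
    have hk : (k : ℕ) = k' := by
      have := congrArg (· / P) h
      simp only [Nat.add_mul_div_left _ _ hP, Nat.div_eq_of_lt r.isLt,
        Nat.div_eq_of_lt r'.isLt] at this
      omega
    simp [Fin.ext hr, Fin.ext hk]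
  simpa [Fintype.card_subtype, bitClass, mul_comm] using Fintype.card_le_of_injective g hg

theorem lt_four_mul_card_bitClass {i : ℕ} (hi : 2 ^ (i + 1) ≤ n) (b : Bool) :
    n < 4 * #(bitClass n i b) := by
  have hcard := mul_div_le_card_bitClass (n := n) i b
  set q := n / 2 ^ (i + 1)
  have hq : 1 ≤ q := (Nat.one_le_div_iff (by positivity)).2 hi
  have hn : n < 2 ^ (i + 1) * (q + 1) := Nat.lt_mul_div_succ n (by positivity)
  rw [pow_succ] at hn
  nlinarith [Nat.mul_le_mul_left (2 ^ i) hq]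

/-- The class of elements with top binary digit `1` can be tiny, so the top digit is handled by
the first and the last `2 ^ log₂ n` elements instead. -/
def separatingSet (n : ℕ) : Option (Fin (Nat.log 2 n)) × Bool → Finset (Fin n)
  | (some i, b) => bitClass n i b
  | (none, b) => block n (2 ^ Nat.log 2 n) b.toNat

theorem lt_four_mul_card_separatingSet (hn : n ≠ 0) :
    ∀ p, n < 4 * #(separatingSet n p)
  | (some i, b) => lt_four_mul_card_bitClass
      ((Nat.pow_le_pow_right two_pos i.isLt).trans (Nat.pow_log_le_self 2 hn)) b
  | (none, b) => by
    have hN := Nat.pow_log_le_self 2 hn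
    have hn := Nat.lt_pow_succ_log_self one_lt_two n
    rw [pow_succ] at hn
    simp only [separatingSet, card_block hN]
    omega

theorem exists_mem_separatingSet_notMem {u u' : Fin n} (h : u ≠ u') :
    ∃ p, u ∈ separatingSet n p ∧ u' ∉ separatingSet n p := by
  by_cases hbit : ∃ i < Nat.log 2 n, (u : ℕ).testBit i ≠ (u' : ℕ).testBit i
  · obtain ⟨i, hi, hne⟩ := hbit
    exact ⟨(some ⟨i, hi⟩, (u : ℕ).testBit i), by simp [separatingSet, bitClass],
      by simpa [separatingSet, bitClass] using hne.symm⟩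
  push Not at hbit
  obtain ⟨N, hN⟩ : ∃ N, 2 ^ Nat.log 2 n = N := ⟨_, rfl⟩
  -- `u` and `u'` agree in all digits below the top one, so they differ by exactly `N`.
  have hmod : (u : ℕ) % N = u' % N := hN ▸ Nat.eq_of_testBit_eq fun i => by
    by_cases hi : i < Nat.log 2 n <;> simp [Nat.testBit_mod_two_pow, hi, hbit]
  have hn : n < 2 * N := hN ▸ pow_succ' 2 (Nat.log 2 n) ▸ Nat.lt_pow_succ_log_self one_lt_two n
  have hlow : ∀ x < 2 * N, x % N = x ∨ x % N + N = x := fun x hx => by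
    rcases lt_or_ge x N with h | h
    · exact .inl (Nat.mod_eq_of_lt h)
    · rw [Nat.mod_eq_sub_mod h, Nat.mod_eq_of_lt (by omega)]
      omega
  have hu := hlow u (by omega)
  have hu' := hlow u' (by omega)
  have hne : (u : ℕ) ≠ u' := Fin.val_ne_of_ne h
  rcases lt_or_ge (u : ℕ) N with hlt | hge
  · refine ⟨(none, false), ?_, ?_⟩ <;> simp [separatingSet, block, hN] <;> omega
  · refine ⟨(none, true), ?_, ?_⟩ <;> simp [separatingSet, block, hN] <;> omega

theorem card_block_card_separatingSet (p) (j : ℕ) :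
    #(block n #(separatingSet n p) j) = #(separatingSet n p) :=
  card_block ((card_le_univ _).trans (Fintype.card_fin n).le) j

theorem exists_mem_block_card_separatingSet (x : Fin n) (p) :
    ∃ j : Fin 4, x ∈ block n #(separatingSet n p) j := by
  have hs := lt_four_mul_card_separatingSet x.pos.ne' p
  exact ⟨⟨x / #(separatingSet n p), Nat.div_lt_of_lt_mul (by omega)⟩,
    mem_block_div (by omega) x⟩

def separatingRectangle (n : ℕ) :
    Bool × (Option (Fin (Nat.log 2 n)) × Bool) × Fin 4 → Finset (Fin n) × Finset (Fin n)
  | (true, p, j) => (separatingSet n p, block n #(separatingSet n p) j)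
  | (false, p, j) => (block n #(separatingSet n p) j, separatingSet n p)

theorem card_separatingRectangle (hn : n ≠ 0) (q) :
    ∃ m, 1 ≤ m ∧ #(separatingRectangle n q).1 = m ∧ #(separatingRectangle n q).2 = m := by
  obtain ⟨_ | _, p, j⟩ := q <;>
  exact ⟨#(separatingSet n p), by have := lt_four_mul_card_separatingSet hn p; omega,
    by simp [separatingRectangle, card_block_card_separatingSet]⟩

theorem exists_separatingRectangle_fst {u u' : Fin n} (v : Fin n) (h : u ≠ u') :
    ∃ q, u ∈ (separatingRectangle n q).1 ∧ u' ∉ (separatingRectangle n q).1 ∧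
      v ∈ (separatingRectangle n q).2 := by
  obtain ⟨p, hu, hu'⟩ := exists_mem_separatingSet_notMem h
  obtain ⟨j, hv⟩ := exists_mem_block_card_separatingSet v p
  exact ⟨(true, p, j), hu, hu', hv⟩

theorem exists_separatingRectangle_snd (u : Fin n) {v v' : Fin n} (h : v ≠ v') :
    ∃ q, u ∈ (separatingRectangle n q).1 ∧ v ∈ (separatingRectangle n q).2 ∧
      v' ∉ (separatingRectangle n q).2 := by
  obtain ⟨p, hv, hv'⟩ := exists_mem_separatingSet_notMem h
  obtain ⟨j, hu⟩ := exists_mem_block_card_separatingSet u p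
  exact ⟨(false, p, j), hu, hv, hv'⟩

end Fin

theorem natLog_two_add_one_le_four_mul_log {n : ℕ} (hn : 2 ≤ n) :
    (Nat.log 2 n + 1 : ℝ) ≤ 4 * Real.log n := by
  have hL : (1 : ℝ) ≤ Nat.log 2 n := by exact_mod_cast Nat.log_pos one_lt_two hn
  have hlog2 : (1 / 2 : ℝ) < Real.log 2 := by linarith [Real.log_two_gt_d9]
  have h : (Nat.log 2 n : ℝ) * Real.log 2 ≤ Real.log n := by
    have := Real.natLog_le_logb n 2
    rwa [Real.logb, le_div_iff₀ (by positivity)] at this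
  nlinarith

/-- There is a constant `C > 0` such that for every `n ≥ 2`, the complete balanced
bipartite graph `K_{n,n}` admits a family of at most `C·log n` subgraphs, each isomorphic
to some balanced complete bipartite graph `K_{m,m}` with `m ≥ 1`, that strongly separates
its edges. -/
theorem complete_bipartite_separating_system :
    ∃ C : ℝ, 0 < C ∧
      ∀ n : ℕ, 2 ≤ n →
        ∃ F : Set (completeBipartiteGraph (Fin n) (Fin n)).Subgraph,
          F.Finite ∧
          (∀ A ∈ F, ∃ m : ℕ, 1 ≤ m ∧
            Nonempty (A.coe ≃g completeBipartiteGraph (Fin m) (Fin m))) ∧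
          StronglySeparatesEdges (completeBipartiteGraph (Fin n) (Fin n)) F ∧
          (F.ncard : ℝ) ≤ C * Real.log n := by
  refine ⟨64, by norm_num, fun n hn => ?_⟩
  let R := Fin.separatingRectangle n
  refine ⟨Set.range fun q => rectangle ((R q).1 : Set (Fin n)) ((R q).2 : Set (Fin n)),
    Set.finite_range _, ?_, ?_, ?_⟩
  · rintro _ ⟨q, rfl⟩
    obtain ⟨m, hm, h₁, h₂⟩ := Fin.card_separatingRectangle (by omega) q
    exact ⟨m, hm, nonempty_iso_rectangle h₁ h₂⟩
  · exact stronglySeparatesEdges_range_rectangle _ _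
      (fun _ _ v h => Fin.exists_separatingRectangle_fst v h)
      (fun u _ _ h => Fin.exists_separatingRectangle_snd u h)
  · calc ((Set.range _).ncard : ℝ)
        ≤ Nat.card (Bool × (Option (Fin (Nat.log 2 n)) × Bool) × Fin 4) := by
          rw [← Set.image_univ, ← Set.ncard_univ]
          exact_mod_cast Set.ncard_image_le
      _ = 16 * (Nat.log 2 n + 1) := by simp [Nat.card_eq_fintype_card]; ring
      _ ≤ 64 * Real.log n := by linarith [natLog_two_add_one_le_four_mul_log hn]
end

section
/- For every δ > 0 there exists n₀ such that every graph G on n ≥ n₀ vertices admits a family F of subgraphs of G, each isomorphic to a balanced complete bipartite graph K_{m,m} for some m ≥ 1, such that F strongly separates the edges of G and |F| ≤ δ·n²; in other words, every n-vertex graph has a strongly edge-separating system of balanced complete bipartite subgraphs of size o(n²). -/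
/-!
Greedily delete edge-disjoint copies of `K_{t,t}`, `t = a²`, from `G` while one exists. By
Kővári–Sós–Turán the `K_{t,t}`-free remainder has `o(n²)` edges, and each of them is taken as a
`K_{1,1}`. In a deleted copy, identify each side with the grid `[a]²`: the `2a` complements of
rows and columns have `a² - a` points each and separate points, so the `(2a)²` complete bipartite
graphs between them separate every edge of the copy from every other edge of `G`. At most
`n²/t²` copies are deleted, which costs `4a² · n²/a⁴ = 4n²/a²` subgraphs.
-/

open SimpleGraph

open Finset Fintype
open scoped Nat

section Grid

variable {α : Type*} [Fintype α] [DecidableEq α]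

def lineCompl : α ⊕ α → Finset (α × α)
  | .inl i => {i}ᶜ ×ˢ univ
  | .inr j => univ ×ˢ {j}ᶜ

theorem card_lineCompl (k : α ⊕ α) : #(lineCompl k) = (card α - 1) * card α := by
  cases k <;> simp [lineCompl, card_compl, mul_comm]

theorem exists_lineCompl_separating [Nontrivial α] (z w : α × α) :
    ∃ k, z ∈ lineCompl k ∧ (w ∈ lineCompl k → w = z) := by
  by_cases h1 : z.1 = w.1
  · by_cases h2 : z.2 = w.2
    · obtain ⟨i, hi⟩ := exists_ne z.1
      exact ⟨.inl i, by simp [lineCompl, hi.symm], fun _ => Prod.ext h1.symm h2.symm⟩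
    · exact ⟨.inr w.2, by simp [lineCompl, h2], by simp [lineCompl]⟩
  · exact ⟨.inl w.1, by simp [lineCompl, h1], by simp [lineCompl]⟩

end Grid

theorem Finset.exists_separating_family_of_card_eq_sq {V : Type*} {P : Finset V}
    {a : ℕ} (ha : 2 ≤ a) (hP : #P = a ^ 2) :
    ∃ S : Fin a ⊕ Fin a → Finset V, (∀ k, S k ⊆ P) ∧ (∀ k, #(S k) = (a - 1) * a) ∧
      ∀ x ∈ P, ∀ x', ∃ k, x ∈ S k ∧ (x' ∈ S k → x' = x) := by
  have : Nontrivial (Fin a) := Fin.nontrivial_iff_two_le.2 ha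
  let e : Fin a × Fin a ≃ P := Fintype.equivOfCardEq (by simp [hP, sq])
  let f : Fin a × Fin a ↪ V := e.toEmbedding.trans (.subtype _)
  refine ⟨fun k => (lineCompl k).map f, fun k => ?_, fun k => by simp [card_lineCompl], ?_⟩
  · intro x hx
    obtain ⟨z, -, rfl⟩ := mem_map.1 hx
    exact (e z).2
  · intro x hx x'
    obtain ⟨z, hz⟩ := e.surjective ⟨x, hx⟩
    have hfz : f z = x := congrArg Subtype.val hz
    by_cases hx' : ∃ w, f w = x'
    · obtain ⟨w, rfl⟩ := hx'
      obtain ⟨k, hzk, hwk⟩ := exists_lineCompl_separating z w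
      refine ⟨k, hfz ▸ mem_map_of_mem f hzk, fun hw => ?_⟩
      rw [← hfz, hwk ((mem_map' f).1 hw)]
    · obtain ⟨k, hzk, -⟩ := exists_lineCompl_separating z z
      refine ⟨k, hfz ▸ mem_map_of_mem f hzk, fun hw => ?_⟩
      obtain ⟨w, -, hw⟩ := mem_map.1 hw
      exact (hx' ⟨w, hw⟩).elim

namespace SimpleGraph

variable {V : Type*} {G : SimpleGraph V}

def betweenSubgraph (G : SimpleGraph V) (s t : Set V) : G.Subgraph where
  verts := s ∪ t
  Adj := (G.between s t).Adj
  adj_sub h := h.1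
  edge_vert := by rintro u v ⟨-, ⟨hu, -⟩ | ⟨hu, -⟩⟩ <;> simp [hu]
  symm := (G.between s t).symm

variable {s t : Set V} {u v : V}

@[simp]
theorem betweenSubgraph_adj :
    (G.betweenSubgraph s t).Adj u v ↔ G.Adj u v ∧ (u ∈ s ∧ v ∈ t ∨ u ∈ t ∧ v ∈ s) :=
  Iff.rfl

theorem betweenSubgraph_comm : G.betweenSubgraph s t = G.betweenSubgraph t s := by
  ext <;> simp [betweenSubgraph, Set.union_comm, between_comm]

theorem mem_edgeSet_betweenSubgraph {e : Sym2 V} :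
    e ∈ (G.betweenSubgraph s t).edgeSet ↔ ∃ u ∈ s, ∃ v ∈ t, G.Adj u v ∧ s(u, v) = e := by
  induction e with
  | _ x y =>
    simp only [Subgraph.mem_edgeSet, betweenSubgraph_adj]
    constructor
    · rintro ⟨hxy, ⟨hx, hy⟩ | ⟨hx, hy⟩⟩
      exacts [⟨x, hx, y, hy, hxy, rfl⟩, ⟨y, hy, x, hx, hxy.symm, Sym2.eq_swap⟩]
    · rintro ⟨u, hu, v, hv, huv, he⟩
      rcases Sym2.eq_iff.1 he with ⟨rfl, rfl⟩ | ⟨rfl, rfl⟩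
      exacts [⟨huv, .inl ⟨hu, hv⟩⟩, ⟨huv.symm, .inr ⟨hv, hu⟩⟩]

theorem mk_mem_edgeSet_betweenSubgraph_iff (huv : G.Adj u v) (hu : u ∉ t) :
    s(u, v) ∈ (G.betweenSubgraph s t).edgeSet ↔ u ∈ s ∧ v ∈ t := by
  simp [huv, hu]

noncomputable def IsCompleteBetween.betweenSubgraphIso (h : G.IsCompleteBetween s t) :
    (G.betweenSubgraph s t).coe ≃g completeBipartiteGraph s t := by
  classical
  refine RelIso.symm ⟨(Equiv.Set.union h.disjoint).symm, fun {a b} => ?_⟩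
  have hst : ∀ x ∈ s, x ∉ t := fun _ hx => h.disjoint.notMem_of_mem_left hx
  have hts : ∀ x ∈ t, x ∉ s := fun _ hx => h.disjoint.notMem_of_mem_right hx
  have hadj : ∀ x ∈ s, ∀ y ∈ t, G.Adj x y := fun _ hx _ hy => h hx hy
  have hadj' : ∀ x ∈ s, ∀ y ∈ t, G.Adj y x := fun _ hx _ hy => (h hx hy).symm
  rcases a with ⟨a, ha⟩ | ⟨a, ha⟩ <;> rcases b with ⟨b, hb⟩ | ⟨b, hb⟩ <;>
    change G.Adj a b ∧ (a ∈ s ∧ b ∈ t ∨ a ∈ t ∧ b ∈ s) ↔ _ <;>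
    simp [ha, hb, hst, hts, hadj, hadj']

theorem IsCompleteBetween.ncard_edgeSet_betweenSubgraph (h : G.IsCompleteBetween s t) :
    (G.betweenSubgraph s t).edgeSet.ncard = s.ncard * t.ncard := by
  have hedges : (G.betweenSubgraph s t).edgeSet = Function.uncurry Sym2.mk '' s ×ˢ t := by
    ext e
    simp only [mem_edgeSet_betweenSubgraph, Set.mem_image, Set.mem_prod, Prod.exists,
      Function.uncurry_apply_pair]
    exact ⟨fun ⟨u, hu, v, hv, _, he⟩ => ⟨u, v, ⟨hu, hv⟩, he⟩,
      fun ⟨u, v, ⟨hu, hv⟩, he⟩ => ⟨u, hu, v, hv, h hu hv, he⟩⟩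
  rw [hedges, Set.InjOn.ncard_image, Set.ncard_prod]
  rintro ⟨u, v⟩ ⟨hu, hv⟩ ⟨u', v'⟩ ⟨hu', hv'⟩ huv
  rcases Sym2.eq_iff.1 huv with ⟨rfl, rfl⟩ | ⟨rfl, -⟩
  · rfl
  · exact (h.disjoint.notMem_of_mem_left hu hv').elim

theorem edgeSet_betweenSubgraph_singleton (huv : G.Adj u v) :
    (G.betweenSubgraph {u} {v}).edgeSet = {s(u, v)} := by
  ext e
  simp only [mem_edgeSet_betweenSubgraph, Set.mem_singleton_iff, exists_eq_left]
  exact ⟨fun h => h.2.symm, fun h => ⟨huv, h.symm⟩⟩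

def Subgraph.IsBalancedBiclique (A : G.Subgraph) : Prop :=
  ∃ m : ℕ, 1 ≤ m ∧ Nonempty (A.coe ≃g completeBipartiteGraph (Fin m) (Fin m))

theorem IsCompleteBetween.isBalancedBiclique {S T : Finset V}
    (h : G.IsCompleteBetween S T) (hST : #S = #T) (hS : S.Nonempty) :
    (G.betweenSubgraph S T).IsBalancedBiclique :=
  ⟨#S, hS.card_pos, ⟨h.betweenSubgraphIso.trans
    (completeBipartiteGraphCongr S.equivFin (T.equivFinOfCardEq hST.symm))⟩⟩

theorem IsCompleteBetween.exists_betweenSubgraph_separating {ι κ : Type*}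
    (h : G.IsCompleteBetween s t) {S : ι → Set V} {T : κ → Set V}
    (hS : ∀ i, S i ⊆ s) (hT : ∀ j, T j ⊆ t)
    (hSsep : ∀ x ∈ s, ∀ x', ∃ i, x ∈ S i ∧ (x' ∈ S i → x' = x))
    (hTsep : ∀ y ∈ t, ∀ y', ∃ j, y ∈ T j ∧ (y' ∈ T j → y' = y))
    {x y : V} (hx : x ∈ s) (hy : y ∈ t) {e : Sym2 V} (he : e ≠ s(x, y)) :
    ∃ i j, s(x, y) ∈ (G.betweenSubgraph (S i) (T j)).edgeSet ∧
      e ∉ (G.betweenSubgraph (S i) (T j)).edgeSet := by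
  have hmem : ∀ {u v i j}, u ∈ s → v ∈ t →
      (s(u, v) ∈ (G.betweenSubgraph (S i) (T j)).edgeSet ↔ u ∈ S i ∧ v ∈ T j) :=
    fun hu hv => mk_mem_edgeSet_betweenSubgraph_iff (h hu hv)
      fun huT => h.disjoint.notMem_of_mem_left hu (hT _ huT)
  by_cases hcross : ∃ u ∈ s, ∃ v ∈ t, s(u, v) = e
  · obtain ⟨u, hu, v, hv, rfl⟩ := hcross
    obtain ⟨i, hxi, hui⟩ := hSsep x hx u
    obtain ⟨j, hyj, hvj⟩ := hTsep y hy v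
    refine ⟨i, j, (hmem hx hy).2 ⟨hxi, hyj⟩, fun huv => he ?_⟩
    obtain ⟨hui', hvj'⟩ := (hmem hu hv).1 huv
    rw [hui hui', hvj hvj']
  · obtain ⟨i, hxi, -⟩ := hSsep x hx x
    obtain ⟨j, hyj, -⟩ := hTsep y hy y
    refine ⟨i, j, (hmem hx hy).2 ⟨hxi, hyj⟩, fun he' => hcross ?_⟩
    obtain ⟨u, hu, v, hv, -, rfl⟩ := mem_edgeSet_betweenSubgraph.1 he'
    exact ⟨u, hS i hu, v, hT j hv, rfl⟩

theorem IsCompleteBetween.exists_separating_family {P Q : Finset V} {a : ℕ}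
    (h : G.IsCompleteBetween P Q) (ha : 2 ≤ a) (hP : #P = a ^ 2) (hQ : #Q = a ^ 2) :
    ∃ 𝒜 : Finset G.Subgraph, #𝒜 ≤ 4 * a ^ 2 ∧ (∀ A ∈ 𝒜, A.IsBalancedBiclique) ∧
      ∀ p ∈ P, ∀ q ∈ Q, ∀ e ≠ s(p, q), ∃ A ∈ 𝒜, s(p, q) ∈ A.edgeSet ∧ e ∉ A.edgeSet := by
  classical
  obtain ⟨S, hSP, hScard, hSsep⟩ := P.exists_separating_family_of_card_eq_sq ha hP
  obtain ⟨T, hTQ, hTcard, hTsep⟩ := Q.exists_separating_family_of_card_eq_sq ha hQ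
  let B : (Fin a ⊕ Fin a) × (Fin a ⊕ Fin a) → G.Subgraph := fun kl =>
    G.betweenSubgraph (S kl.1) (T kl.2)
  refine ⟨univ.image B, card_image_le.trans (le_of_eq (by simp; ring)), ?_, ?_⟩
  · simp only [mem_image, mem_univ, true_and, forall_exists_index, forall_apply_eq_imp_iff]
    rintro ⟨k, l⟩
    refine IsCompleteBetween.isBalancedBiclique (fun x hx y hy => h (hSP k hx) (hTQ l hy))
      (by rw [hScard, hTcard]) (card_pos.1 ?_)
    rw [hScard]
    exact Nat.mul_pos (by omega) (by omega)
  · intro p hp q hq e he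
    obtain ⟨k, l, hin, hout⟩ := h.exists_betweenSubgraph_separating (S := fun k => (S k : Set V))
      (T := fun l => (T l : Set V)) (fun k => coe_subset.2 (hSP k)) (fun l => coe_subset.2 (hTQ l))
      hSsep hTsep hp hq he
    exact ⟨B (k, l), mem_image_of_mem B (mem_univ _), hin, hout⟩

theorem exists_bicliques_and_free_subgraph [Finite V] (H : SimpleGraph V) {t : ℕ} (ht : 0 < t) :
    ∃ L : Finset (Finset V × Finset V), ∃ R ≤ H,
      (∀ K ∈ L, #K.1 = t ∧ #K.2 = t ∧ H.IsCompleteBetween K.1 K.2) ∧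
      (∀ e ∈ H.edgeSet, e ∈ R.edgeSet ∨ ∃ K ∈ L, ∃ p ∈ K.1, ∃ q ∈ K.2, s(p, q) = e) ∧
      #L * t ^ 2 ≤ H.edgeSet.ncard ∧ (completeBipartiteGraph (Fin t) (Fin t)).Free R := by
  classical
  induction hn : H.edgeSet.ncard using Nat.strong_induction_on generalizing H with
  | _ n ih =>
    by_cases hfree : (completeBipartiteGraph (Fin t) (Fin t)).Free H
    · exact ⟨∅, H, le_rfl, by simp, fun e he => .inl he, by simp, hfree⟩
    obtain ⟨P, Q, hP, hQ, hPQ⟩ := completeBipartiteGraph_isContained_iff.1 (not_not.1 hfree)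
    rw [Fintype.card_fin] at hP hQ
    set C := (H.betweenSubgraph P Q).edgeSet
    have hC : C.ncard = t ^ 2 := by
      rw [hPQ.ncard_edgeSet_betweenSubgraph, Set.ncard_coe_finset, Set.ncard_coe_finset, hP, hQ, sq]
    have hsplit : (H.deleteEdges C).edgeSet.ncard + t ^ 2 = n := by
      rw [edgeSet_deleteEdges, ← hC, ← hn]
      exact Set.ncard_sdiff_add_ncard_of_subset (Subgraph.edgeSet_subset _)
    obtain ⟨L, R, hR, hL, hcover, hcount, hRfree⟩ :=
      ih _ (by have := pow_pos ht 2; omega) (H.deleteEdges C) rfl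
    refine ⟨insert (P, Q) L, R, hR.trans (deleteEdges_le _), ?_, fun e he => ?_, ?_, hRfree⟩
    · simp only [mem_insert, forall_eq_or_imp]
      refine ⟨⟨hP, hQ, hPQ⟩, fun K hK => ?_⟩
      obtain ⟨h1, h2, h3⟩ := hL K hK
      exact ⟨h1, h2, fun _ hx _ hy => deleteEdges_le _ (h3 hx hy)⟩
    · by_cases heC : e ∈ C
      · obtain ⟨p, hp, q, hq, -, rfl⟩ := mem_edgeSet_betweenSubgraph.1 heC
        exact .inr ⟨(P, Q), mem_insert_self _ _, p, hp, q, hq, rfl⟩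
      · rcases hcover e ((edgeSet_deleteEdges C).symm ▸ ⟨he, heC⟩) with h | ⟨K, hK, hKe⟩
        exacts [.inl h, .inr ⟨K, mem_insert_of_mem hK, hKe⟩]
    · calc #(insert (P, Q) L) * t ^ 2 ≤ (#L + 1) * t ^ 2 := by gcongr; exact card_insert_le _ _
        _ ≤ n := by rw [add_mul, one_mul, ← hsplit]; gcongr

theorem ne_zero_of_free_completeBipartiteGraph {t : ℕ} {H : SimpleGraph V}
    (hH : (completeBipartiteGraph (Fin t) (Fin t)).Free H) : t ≠ 0 := by
  rintro rfl
  exact hH (completeBipartiteGraph_isContained_iff.2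
    ⟨∅, ∅, by simp, by simp, by simp [IsCompleteBetween]⟩)

theorem ncard_edgeSet_le_sq [Fintype V] (G : SimpleGraph V) : G.edgeSet.ncard ≤ card V ^ 2 := by
  classical
  rw [← coe_edgeFinset, Set.ncard_coe_finset]
  exact G.card_edgeFinset_le_card_choose_two.trans (Nat.choose_le_pow _ _)

section Finite

variable [Fintype V] [DecidableEq V] {H : SimpleGraph V} [DecidableRel H.Adj] {t : ℕ}

/-- Double count the pairs `(v, T)` of a vertex and a `t`-set of its neighbours: a `t`-set has
fewer than `t` common neighbours. -/
theorem sum_choose_degree_le (hH : (completeBipartiteGraph (Fin t) (Fin t)).Free H) :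
    ∑ v, (H.degree v).choose t ≤ (t - 1) * (card V).choose t := by
  let r : V → Finset V → Prop := fun v T => T ⊆ H.neighborFinset v
  have hdeg : ∀ v, (H.degree v).choose t = #((univ.powersetCard t).bipartiteAbove r v) := by
    intro v
    rw [← card_neighborFinset_eq_degree, ← card_powersetCard]
    congr 1
    ext T
    simp [bipartiteAbove, r, mem_powersetCard, and_comm]
  have hcommon : ∀ T ∈ univ.powersetCard t, #(univ.bipartiteBelow r T) ≤ t - 1 := by
    intro T hT
    by_contra! hlt
    obtain ⟨S, hS, hScard⟩ := exists_subset_card_eq (show t ≤ #(univ.bipartiteBelow r T) by omega)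
    refine hH (completeBipartiteGraph_isContained_iff.2 ⟨S, T, by simpa using hScard,
      by simpa using (mem_powersetCard.1 hT).2, fun v hv w hw => ?_⟩)
    simpa using (mem_filter.1 (hS hv)).2 hw
  calc ∑ v, (H.degree v).choose t
      = ∑ T ∈ univ.powersetCard t, #(univ.bipartiteBelow r T) := by
        simp_rw [hdeg]; exact sum_card_bipartiteAbove_eq_sum_card_bipartiteBelow _
    _ ≤ #(univ.powersetCard t) * (t - 1) := sum_le_card_nsmul _ _ _ hcommon
    _ = (t - 1) * (card V).choose t := by rw [card_powersetCard, card_univ, mul_comm]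

/-- The Kővári–Sós–Turán bound. -/
theorem pow_two_mul_card_edgeFinset_sub_le
    (hH : (completeBipartiteGraph (Fin t) (Fin t)).Free H) :
    (2 * #H.edgeFinset - t * card V) ^ t ≤ (t - 1) * card V ^ (2 * t - 1) := by
  set n := card V
  have ht := ne_zero_of_free_completeBipartiteGraph hH
  let x : V → ℕ := fun v => H.degree v + 1 - t
  have hpow : ∑ v, x v ^ t ≤ (t - 1) * n ^ t :=
    calc ∑ v, x v ^ t ≤ ∑ v, (H.degree v).descFactorial t :=
          sum_le_sum fun v _ => Nat.pow_sub_le_descFactorial _ _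
      _ = t ! * ∑ v, (H.degree v).choose t := by
          simp_rw [Nat.descFactorial_eq_factorial_mul_choose, mul_sum]
      _ ≤ t ! * ((t - 1) * n.choose t) := Nat.mul_le_mul_left _ (sum_choose_degree_le hH)
      _ = (t - 1) * n.descFactorial t := by
          rw [Nat.descFactorial_eq_factorial_mul_choose]; ring
      _ ≤ (t - 1) * n ^ t := Nat.mul_le_mul_left _ (Nat.descFactorial_le_pow _ _)
  have hjensen : (∑ v, x v) ^ t ≤ n ^ (t - 1) * ∑ v, x v ^ t := by
    obtain ⟨k, rfl⟩ := Nat.exists_eq_succ_of_ne_zero ht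
    simpa using pow_sum_le_card_mul_sum_pow (s := univ) (f := x) (fun _ _ => Nat.zero_le _) k
  have hsum : 2 * #H.edgeFinset - t * n ≤ ∑ v, x v := by
    rw [← sum_degrees_eq_twice_card_edges, tsub_le_iff_right]
    calc ∑ v, H.degree v ≤ ∑ v, (x v + t) := sum_le_sum fun v _ => by dsimp only [x]; omega
      _ = ∑ v, x v + t * n := by rw [sum_add_distrib, sum_const, card_univ, smul_eq_mul, mul_comm]
  calc (2 * #H.edgeFinset - t * n) ^ t ≤ (∑ v, x v) ^ t := Nat.pow_le_pow_left hsum _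
    _ ≤ n ^ (t - 1) * ((t - 1) * n ^ t) := hjensen.trans (Nat.mul_le_mul_left _ hpow)
    _ = (t - 1) * n ^ (2 * t - 1) := by
        rw [mul_left_comm, ← pow_add]; congr 2; omega

end Finite

theorem exists_forall_ncard_edgeSet_le_of_free (t : ℕ) {ε : ℝ} (hε : 0 < ε) :
    ∃ n₀ : ℕ, ∀ (W : Type*) [Fintype W] (H : SimpleGraph W), n₀ ≤ card W →
      (completeBipartiteGraph (Fin t) (Fin t)).Free H →
        (H.edgeSet.ncard : ℝ) ≤ ε * (card W : ℝ) ^ 2 := by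
  refine ⟨⌈t / ε⌉₊ + ⌈t / ε ^ t⌉₊, fun W _ H hn hH => ?_⟩
  classical
  have ht := ne_zero_of_free_completeBipartiteGraph hH
  set n := card W
  have htn : (t : ℝ) ≤ ε * n := by
    rw [← div_le_iff₀' hε]
    exact (Nat.le_ceil _).trans (by exact_mod_cast (Nat.le_add_right _ _).trans hn)
  have htn' : (t : ℝ) ≤ ε ^ t * n := by
    rw [← div_le_iff₀' (by positivity)]
    exact (Nat.le_ceil _).trans (by exact_mod_cast (Nat.le_add_left _ _).trans hn)
  rw [← coe_edgeFinset, Set.ncard_coe_finset]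
  by_contra! hlt
  have hsub : ε * n ^ 2 < ((2 * #H.edgeFinset - t * n : ℕ) : ℝ) := by
    have : (t : ℝ) * n ≤ ε * n ^ 2 := by nlinarith [n.cast_nonneg (α := ℝ)]
    rw [Nat.cast_sub (by exact_mod_cast (by linarith : (t : ℝ) * n ≤ 2 * #H.edgeFinset))]
    push_cast
    linarith
  have hkst : (ε * n ^ 2) ^ t < (t - 1 : ℕ) * (n : ℝ) ^ (2 * t - 1) :=
    (pow_lt_pow_left₀ hsub (by positivity) ht).trans_le
      (by exact_mod_cast pow_two_mul_card_edgeFinset_sub_le hH)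
  have hpow : (ε * n ^ 2) ^ t = ε ^ t * n * (n : ℝ) ^ (2 * t - 1) := by
    rw [mul_pow, ← pow_mul, mul_assoc, ← pow_succ']
    congr 2
    omega
  have : ((t - 1 : ℕ) : ℝ) ≤ t := by exact_mod_cast Nat.sub_le t 1
  rw [hpow] at hkst
  nlinarith [pow_nonneg (Nat.cast_nonneg (α := ℝ) n) (2 * t - 1)]

theorem exists_balanced_biclique_separating_family [Finite V] (G : SimpleGraph V) {a : ℕ}
    (ha : 2 ≤ a) :
    ∃ R ≤ G, (completeBipartiteGraph (Fin (a ^ 2)) (Fin (a ^ 2))).Free R ∧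
      ∃ F : Set G.Subgraph, F.Finite ∧ (∀ A ∈ F, A.IsBalancedBiclique) ∧
        StronglySeparatesEdges G F ∧
        F.ncard * a ^ 2 ≤ R.edgeSet.ncard * a ^ 2 + 4 * G.edgeSet.ncard := by
  classical
  obtain ⟨L, R, hRG, hL, hcover, hcount, hRfree⟩ :=
    G.exists_bicliques_and_free_subgraph (t := a ^ 2) (by positivity)
  choose! 𝒜 h𝒜card h𝒜bal h𝒜sep using fun K (hK : K ∈ L) =>
    (hL K hK).2.2.exists_separating_family ha (hL K hK).1 (hL K hK).2.1
  let edgeSubgraph : Sym2 V → G.Subgraph :=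
    Sym2.lift ⟨fun u v => G.betweenSubgraph {u} {v}, fun _ _ => betweenSubgraph_comm⟩
  refine ⟨R, hRG, hRfree, edgeSubgraph '' R.edgeSet ∪ ↑(L.biUnion 𝒜),
    (R.edgeSet.toFinite.image _).union (finite_toSet _), ?_, ?_, ?_⟩
  · rintro A (⟨e, he, rfl⟩ | hA)
    · induction e with
      | _ u v =>
        show (G.betweenSubgraph {u} {v}).IsBalancedBiclique
        rw [← Finset.coe_singleton u, ← Finset.coe_singleton v]
        refine IsCompleteBetween.isBalancedBiclique (fun x hx y hy => ?_) (by simp) (by simp)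
        rw [Finset.coe_singleton, Set.mem_singleton_iff] at hx hy
        exact hx ▸ hy ▸ hRG he
    · obtain ⟨K, hK, hAK⟩ := mem_biUnion.1 hA
      exact h𝒜bal K hK A hAK
  · intro e he e' _ hne
    rcases hcover e he with heR | ⟨K, hK, p, hp, q, hq, rfl⟩
    · induction e with
      | _ u v =>
        refine ⟨edgeSubgraph s(u, v), .inl ⟨_, heR, rfl⟩, ?_⟩
        simp only [edgeSubgraph, Sym2.lift_mk, edgeSet_betweenSubgraph_singleton (hRG heR)]
        exact ⟨rfl, Ne.symm hne⟩
    · obtain ⟨A, hA, hin, hout⟩ := h𝒜sep K hK p hp q hq e' (Ne.symm hne)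
      exact ⟨A, .inr (mem_biUnion.2 ⟨K, hK, hA⟩), hin, hout⟩
  · calc _ ≤ (R.edgeSet.ncard + #L * (4 * a ^ 2)) * a ^ 2 := by
          gcongr
          refine (Set.ncard_union_le _ _).trans (add_le_add Set.ncard_image_le ?_)
          rw [Set.ncard_coe_finset]
          exact card_biUnion_le_card_mul _ _ _ h𝒜card
      _ = R.edgeSet.ncard * a ^ 2 + 4 * (#L * (a ^ 2) ^ 2) := by ring
      _ ≤ _ := by gcongr

end SimpleGraph

/-- For every `δ > 0` there is `n₀` such that every graph `G` on `n ≥ n₀` vertices admits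
a family of at most `δ·n²` subgraphs, each isomorphic to a balanced complete bipartite
graph `K_{m,m}` with `m ≥ 1`, that strongly separates the edges of `G`. -/
theorem balanced_bipartite_separating_system_subquadratic :
    ∀ δ : ℝ, 0 < δ →
      ∃ n₀ : ℕ, ∀ n : ℕ, n₀ ≤ n →
        ∀ (V : Type) [Fintype V], Fintype.card V = n →
          ∀ G : SimpleGraph V,
            ∃ F : Set G.Subgraph,
              F.Finite ∧
              (∀ A ∈ F, ∃ m : ℕ, 1 ≤ m ∧
                Nonempty (A.coe ≃g completeBipartiteGraph (Fin m) (Fin m))) ∧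
              StronglySeparatesEdges G F ∧
              (F.ncard : ℝ) ≤ δ * (n : ℝ) ^ 2 := by
  intro δ hδ
  set a := ⌈8 / δ⌉₊ + 2
  obtain ⟨n₀, hn₀⟩ := exists_forall_ncard_edgeSet_le_of_free (a ^ 2) (half_pos hδ)
  refine ⟨n₀, fun n hn V _ hV G => ?_⟩
  obtain ⟨R, -, hRfree, F, hF, hbal, hsep, hcard⟩ :=
    G.exists_balanced_biclique_separating_family (a := a) (by omega)
  refine ⟨F, hF, hbal, hsep, ?_⟩
  have hR : (R.edgeSet.ncard : ℝ) ≤ δ / 2 * n ^ 2 := hV ▸ hn₀ V R (hV ▸ hn) hRfree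
  have hG : (G.edgeSet.ncard : ℝ) ≤ n ^ 2 := hV ▸ by exact_mod_cast G.ncard_edgeSet_le_sq
  have hδa : 8 ≤ δ * a ^ 2 := by
    have h1 : 8 / δ ≤ a := (Nat.le_ceil _).trans (by exact_mod_cast Nat.le_add_right _ _)
    have h2 : (a : ℝ) ≤ a ^ 2 := by exact_mod_cast Nat.le_self_pow two_ne_zero a
    rw [div_le_iff₀' hδ] at h1
    nlinarith
  refine le_of_mul_le_mul_right ?_ (by positivity : (0 : ℝ) < a ^ 2)
  calc (F.ncard : ℝ) * a ^ 2 ≤ R.edgeSet.ncard * a ^ 2 + 4 * G.edgeSet.ncard := by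
        exact_mod_cast hcard
    _ ≤ δ / 2 * n ^ 2 * a ^ 2 + 4 * n ^ 2 := by gcongr
    _ ≤ δ * n ^ 2 * a ^ 2 := by nlinarith [sq_nonneg (n : ℝ)]
end

section
/- Let H be a graph with at least one edge. There exists a constant C > 0 (depending only on H) such that for every n ≥ 2 the n-balanced blowup H(n) of H admits a family F of subgraphs, each isomorphic to a balanced blowup of H, such that |F| ≤ C·log n and F strongly separates the copies of H in H(n): for every two distinct subgraphs H₁, H₂ of H(n) isomorphic to H there exist F₁, F₂ ∈ F with H₁ ⊆ F₁, H₂ ⊄ F₁, H₂ ⊆ F₂ and H₁ ⊄ F₂. -/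
open SimpleGraph

/-- The `k`-balanced blowup `H(k)` of `H`: each vertex `x` is replaced by `k` copies, and
each edge by a complete bipartite graph between the corresponding copies. -/
def balancedBlowup {α : Type*} (H : SimpleGraph α) (k : ℕ) : SimpleGraph (α × Fin k) :=
  SimpleGraph.comap Prod.fst H

/-- The family `F` of subgraphs of `G` strongly separates the copies of `H` in `G`. -/
def StronglySeparatesCopies {α V : Type*} (H : SimpleGraph α) (G : SimpleGraph V)
    (F : Set G.Subgraph) : Prop :=
  ∀ H₁ H₂ : G.Subgraph, Nonempty (H₁.coe ≃g H) → Nonempty (H₂.coe ≃g H) → H₁ ≠ H₂ →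
    ∃ F₁ ∈ F, ∃ F₂ ∈ F, H₁ ≤ F₁ ∧ ¬ H₂ ≤ F₁ ∧ H₂ ≤ F₂ ∧ ¬ H₁ ≤ F₂

/-!
A copy of `H` in `H(n)` is an injective homomorphism `f`, and `e := Prod.fst ∘ f` is an
endomorphism of `H`. Reserve `k = ⌊n / 2|H|⌋` slots of `Fin n` for every vertex of `H`; a choice
`σ` of one permutation of `Fin n` per vertex class then gives the copy of `H(k)` that puts the
class of `x` at the positions `(σ (e x))⁻¹(slots of x)` inside the class of `e x`. For a uniformly
random `σ`, with probability at least `(4|H|)^-(|H|+1)` this copy contains `f` and misses a given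
vertex `v` outside `f`. This event depends only on the positions of `f` and `v`, of which there
are at most `(|H| n)^(|H|+1)`, so a union bound yields `O(log n)` choices of `σ` that serve all
pairs `(f, v)` and all `|H|^|H|` endomorphisms at once. For `n < 2|H|` the copies of `H = H(1)`
themselves form a family of bounded size.

Such a member `A` induces exactly `f` on the vertices of `f` and misses `v`. It separates `f` from
a copy `f'` through `v` if `f'` has a vertex `v` outside `f`, and otherwise because `f' ≤ A` would
force `f' ≤ f`, while copies of a finite graph are never properly nested.
-/

open Finset Function
open scoped Nat

section PermCount

variable {Y γ : Type*} [Fintype Y] [Fintype γ] [DecidableEq γ]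

theorem card_perm_apply_eq {q f : Y → γ} (hq : Injective q) (hf : Injective f) :
    Fintype.card {π : Equiv.Perm γ // ∀ y, π (q y) = f y} = (Fintype.card γ - Fintype.card Y)! := by
  set e₀ : Set.range q ≃ Set.range f :=
    (Equiv.ofInjective q hq).symm.trans (Equiv.ofInjective f hf)
  have key (π : Equiv.Perm γ) : (∀ y, π (q y) = f y) ↔ ∀ z : Set.range q, π z = e₀ z := by
    refine ⟨?_, fun h y => by simpa [e₀] using h ⟨q y, y, rfl⟩⟩
    rintro h ⟨-, y, rfl⟩
    simp [e₀, h y]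
  have hcompl {g : Y → γ} (hg : Injective g) :
      Fintype.card ((Set.range g)ᶜ : Set γ) = Fintype.card γ - Fintype.card Y := by
    rw [Fintype.card_compl_set, Set.card_range_of_injective hg]
  rw [Fintype.card_congr ((Equiv.subtypeEquivRight key).trans (Equiv.Set.compl e₀)),
    Fintype.card_equiv (Fintype.equivOfCardEq ((hcompl hq).trans (hcompl hf).symm)),
    hcompl hq]

theorem card_perm_apply_mem {q : Y → γ} (hq : Injective q) {T : Y → Finset γ}
    (hT : Pairwise (Disjoint on T)) :
    Fintype.card {π : Equiv.Perm γ // ∀ y, π (q y) ∈ T y}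
      = (∏ y, #(T y)) * (Fintype.card γ - Fintype.card Y)! := by
  classical
  let values (π : {π : Equiv.Perm γ // ∀ y, π (q y) ∈ T y}) : {f : Y → γ // ∀ y, f y ∈ T y} :=
    ⟨fun y => π.1 (q y), π.2⟩
  have hfiber (f : {f : Y → γ // ∀ y, f y ∈ T y}) :
      Fintype.card {π // values π = f} = (Fintype.card γ - Fintype.card Y)! := by
    have hf : Injective f.1 := fun y y' h => by_contra fun hne =>
      Finset.disjoint_left.mp (hT hne) (f.2 y) (h ▸ f.2 y')
    rw [← card_perm_apply_eq hq hf]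
    refine Fintype.card_congr ((Equiv.subtypeEquivRight fun π => ?_).trans
      ((Equiv.subtypeSubtypeEquivSubtypeInter (fun π : Equiv.Perm γ => ∀ y, π (q y) ∈ T y)
        (fun π => ∀ y, π (q y) = f.1 y)).trans
      (Equiv.subtypeEquivRight fun π => ⟨And.right, fun h => ⟨fun y => h y ▸ f.2 y, h⟩⟩)))
    simp only [values, Subtype.ext_iff, funext_iff]
  rw [Fintype.card_congr (Equiv.sigmaFiberEquiv values).symm, Fintype.card_sigma,
    Finset.sum_congr rfl fun f _ => hfiber f, Finset.sum_const, Finset.card_univ, smul_eq_mul,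
    Fintype.card_congr (Equiv.subtypePiEquivPi), Fintype.card_pi]
  simp

theorem factorial_le_pow_mul_factorial_sub {n r : ℕ} (h : r ≤ n) : n ! ≤ n ^ r * (n - r)! := by
  rw [← Nat.factorial_mul_descFactorial h, mul_comm]
  exact Nat.mul_le_mul_right _ (Nat.descFactorial_le_pow n r)

theorem factorial_le_card_perm_apply_mem_mul_pow {q : Y → γ} (hq : Injective q)
    {T : Y → Finset γ} (hT : Pairwise (Disjoint on T)) {c : ℕ}
    (hc : ∀ y, Fintype.card γ ≤ c * #(T y)) :
    (Fintype.card γ)! ≤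
      Fintype.card {π : Equiv.Perm γ // ∀ y, π (q y) ∈ T y} * c ^ Fintype.card Y := by
  set n := Fintype.card γ
  have hpow : n ^ Fintype.card Y ≤ c ^ Fintype.card Y * ∏ y, #(T y) := by
    rw [← Finset.card_univ, ← Finset.prod_const, ← Finset.prod_const, ← Finset.prod_mul_distrib]
    exact Finset.prod_le_prod' fun y _ => hc y
  calc n ! ≤ n ^ Fintype.card Y * (n - Fintype.card Y)! :=
        factorial_le_pow_mul_factorial_sub (Fintype.card_le_of_injective q hq)
    _ ≤ c ^ Fintype.card Y * (∏ y, #(T y)) * (n - Fintype.card Y)! := by gcongr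
    _ = _ := by rw [card_perm_apply_mem hq hT]; ring

theorem card_pi_perm_le_card_apply_mem_mul_pow {β X : Type*} [Fintype β] [DecidableEq β]
    [Fintype X] {w : X → β × γ} (hw : Injective w) {T : X → Finset γ}
    (hT : ∀ ⦃y y'⦄, (w y).1 = (w y').1 → y ≠ y' → Disjoint (T y) (T y')) {c : ℕ}
    (hc : ∀ y, Fintype.card γ ≤ c * #(T y)) :
    Fintype.card (β → Equiv.Perm γ) ≤
      Fintype.card {σ : β → Equiv.Perm γ // ∀ y, σ (w y).1 (w y).2 ∈ T y} *
        c ^ Fintype.card X := by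
  let Fiber (b : β) := {y // (w y).1 = b}
  have hsplit : {σ : β → Equiv.Perm γ // ∀ y, σ (w y).1 (w y).2 ∈ T y} ≃
      ∀ b, {π : Equiv.Perm γ // ∀ y : Fiber b, π (w y).2 ∈ T y} :=
    (Equiv.subtypeEquivRight fun σ =>
      ⟨fun h b (y : Fiber b) => by simpa [y.2] using h y, fun h y => h _ ⟨y, rfl⟩⟩).trans
      (Equiv.subtypePiEquivPi (p := fun b (π : Equiv.Perm γ) => ∀ y : Fiber b, π (w y).2 ∈ T y))
  have hfiber (b : β) : (Fintype.card γ)! ≤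
      Fintype.card {π : Equiv.Perm γ // ∀ y : Fiber b, π (w y).2 ∈ T y} *
        c ^ Fintype.card (Fiber b) := by
    refine factorial_le_card_perm_apply_mem_mul_pow (q := fun y : Fiber b => (w y).2) ?_ ?_
      fun y => hc y
    · intro y y' h
      exact Subtype.ext (hw (Prod.ext (y.2.trans y'.2.symm) h))
    · intro y y' hne
      exact hT (y.2.trans y'.2.symm) fun h => hne (Subtype.ext h)
  have hcardX : ∑ b, Fintype.card (Fiber b) = Fintype.card X := by
    rw [← Fintype.card_sigma]; exact Fintype.card_congr (Equiv.sigmaFiberEquiv _)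
  calc Fintype.card (β → Equiv.Perm γ) = ∏ _b : β, (Fintype.card γ)! := by
        simp [Fintype.card_perm]
    _ ≤ ∏ b, Fintype.card {π : Equiv.Perm γ // ∀ y : Fiber b, π (w y).2 ∈ T y} *
          c ^ Fintype.card (Fiber b) := Finset.prod_le_prod' fun b _ => hfiber b
    _ = _ := by
      rw [Finset.prod_mul_distrib, Finset.prod_pow_eq_pow_sum, hcardX, Fintype.card_congr hsplit,
        Fintype.card_pi]

end PermCount

theorem exists_forall_exists_of_card_mul_pow_lt {Ω R : Type*} [Fintype Ω] [Nonempty Ω]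
    (Good : Ω → R → Prop) (S : Finset R) {D L : ℕ}
    (hdens : ∀ r ∈ S, Fintype.card Ω ≤ D * Nat.card {ω // Good ω r})
    (hS : #S * (D - 1) ^ L < D ^ L) :
    ∃ T : Fin L → Ω, ∀ r ∈ S, ∃ i, Good (T i) r := by
  classical
  by_contra! hbad
  have hunion : Fintype.card Ω ^ L ≤ ∑ r ∈ S, Fintype.card {ω // ¬ Good ω r} ^ L := by
    have hcover : (univ : Finset (Fin L → Ω)) ⊆
        S.biUnion fun r => univ.filter fun T => ∀ i, ¬ Good (T i) r := by
      intro T _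
      obtain ⟨r, hr, hT⟩ := hbad T
      exact Finset.mem_biUnion.mpr ⟨r, hr, Finset.mem_filter.mpr ⟨Finset.mem_univ _, hT⟩⟩
    calc Fintype.card Ω ^ L = #(univ : Finset (Fin L → Ω)) := by simp
      _ ≤ ∑ r ∈ S, #(univ.filter fun T : Fin L → Ω => ∀ i, ¬ Good (T i) r) :=
        (Finset.card_le_card hcover).trans Finset.card_biUnion_le
      _ = _ := by
        refine Finset.sum_congr rfl fun r _ => ?_
        rw [← Fintype.card_subtype,
          Fintype.card_congr (Equiv.subtypePiEquivPi (p := fun (_ : Fin L) ω => ¬ Good ω r)),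
          Fintype.card_pi]
        simp
  have hbadD (r) (hr : r ∈ S) :
      D * Fintype.card {ω // ¬ Good ω r} ≤ (D - 1) * Fintype.card Ω := by
    have := hdens r hr
    rw [Nat.card_eq_fintype_card] at this
    rw [Fintype.card_subtype_compl, Nat.mul_sub, Nat.sub_mul, one_mul]
    omega
  have hΩ : 0 < Fintype.card Ω ^ L := by positivity
  have : D ^ L * Fintype.card Ω ^ L < D ^ L * Fintype.card Ω ^ L := calc
    D ^ L * Fintype.card Ω ^ L ≤ ∑ r ∈ S, (D * Fintype.card {ω // ¬ Good ω r}) ^ L := by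
        simp_rw [mul_pow, ← Finset.mul_sum]; exact Nat.mul_le_mul_left _ hunion
    _ ≤ ∑ _r ∈ S, ((D - 1) * Fintype.card Ω) ^ L :=
        Finset.sum_le_sum fun r hr => Nat.pow_le_pow_left (hbadD r hr) L
    _ = #S * (D - 1) ^ L * Fintype.card Ω ^ L := by rw [Finset.sum_const, smul_eq_mul]; ring
    _ < D ^ L * Fintype.card Ω ^ L := Nat.mul_lt_mul_of_pos_right hS hΩ
  exact lt_irrefl _ this

theorem mul_sub_one_pow_lt_pow_of_mul_log_lt {N D L : ℕ} (hD : 1 ≤ D)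
    (h : D * Real.log N < L) : N * (D - 1) ^ L < D ^ L := by
  rcases N.eq_zero_or_pos with rfl | hN
  · simp; positivity
  have hD0 : (0 : ℝ) < D := by exact_mod_cast hD
  have hratio : ((D : ℝ) - 1) / D ≤ Real.exp (-1 / D) := by
    have := Real.add_one_le_exp (-1 / D)
    rwa [show -1 / (D : ℝ) + 1 = ((D : ℝ) - 1) / D by field_simp; ring] at this
  have hlog : Real.log N - L / D < 0 := by
    rw [sub_neg, lt_div_iff₀ hD0]; linarith
  have key : (N : ℝ) * (((D : ℝ) - 1) / D) ^ L < 1 := calc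
    (N : ℝ) * (((D : ℝ) - 1) / D) ^ L ≤ Real.exp (Real.log N) * Real.exp (-1 / D) ^ L := by
        rw [Real.exp_log (by exact_mod_cast hN)]
        gcongr
        exact div_nonneg (by linarith [show (1 : ℝ) ≤ D by exact_mod_cast hD]) hD0.le
    _ = Real.exp (Real.log N - L / D) := by
        rw [← Real.exp_nat_mul, ← Real.exp_add]; ring_nf
    _ < 1 := Real.exp_lt_one_iff.mpr hlog
  have : (N : ℝ) * ((D : ℝ) - 1) ^ L < (D : ℝ) ^ L := by
    rw [div_pow, mul_div_assoc', div_lt_one (by positivity)] at key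
    exact key
  exact_mod_cast (by push_cast [Nat.cast_sub hD]; exact this :
    ((N * (D - 1) ^ L : ℕ) : ℝ) < ((D ^ L : ℕ) : ℝ))

theorem floor_mul_log_add_one_le {K : ℝ} (hK : 0 ≤ K) {n : ℕ} (hn : 2 ≤ n) :
    (⌊K * Real.log n⌋₊ + 1 : ℝ) ≤ (K + 1 / Real.log 2) * Real.log n := by
  have hlog2 : 0 < Real.log 2 := Real.log_pos one_lt_two
  have hlog : Real.log 2 ≤ Real.log n := Real.log_le_log two_pos (by exact_mod_cast hn)
  have hfloor : (⌊K * Real.log n⌋₊ : ℝ) ≤ K * Real.log n :=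
    Nat.floor_le (mul_nonneg hK (hlog2.le.trans hlog))
  have hone : 1 ≤ 1 / Real.log 2 * Real.log n := by
    rw [one_div_mul_eq_div, one_le_div hlog2]; exact hlog
  linarith

theorem exists_two_mul_mul_le_le_four_mul_mul {m n : ℕ} (hm : 0 < m) (hn : 2 * m ≤ n) :
    ∃ k, 1 ≤ k ∧ 2 * m * k ≤ n ∧ n ≤ 4 * m * k := by
  refine ⟨n / (2 * m), (Nat.one_le_div_iff (by omega)).mpr hn, Nat.mul_div_le n (2 * m), ?_⟩
  have := Nat.lt_mul_div_succ n (show 0 < 2 * m by omega)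
  nlinarith [(Nat.one_le_div_iff (show 0 < 2 * m by omega)).mpr hn]

theorem Option.elim_injective {α β : Type*} {f : α → β} (hf : Injective f) {b : β}
    (hb : b ∉ Set.range f) : Injective fun y : Option α => y.elim b f := by
  rintro (_ | x) (_ | y) h
  · rfl
  · exact absurd ⟨y, h.symm⟩ hb
  · exact absurd ⟨x, h⟩ hb
  · exact congrArg some (hf h)

theorem exists_notMem_range_prod {α β : Type*} [Finite α] [Nonempty α] [Finite β] [Nontrivial β]
    (f : α → α × β) : ∃ v, v ∉ Set.range f := by
  by_contra! hsurj
  have := Nat.card_le_card_of_surjective f fun v => hsurj v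
  rw [Nat.card_prod] at this
  have := Finite.one_lt_card (α := β)
  have := Nat.card_pos (α := α)
  nlinarith

namespace SimpleGraph.Copy

variable {α β V : Type*} {A : SimpleGraph α} {B : SimpleGraph β} {G : SimpleGraph V}

@[simp] theorem verts_toSubgraph (f : Copy A G) : f.toSubgraph.verts = Set.range f := by
  simp [toSubgraph, Subgraph.map_verts, Set.image_univ]

theorem toSubgraph_le_of_comp (f : Copy A G) (ψ : Copy B G) (h : A →g B)
    (hψ : ∀ a, ψ (h a) = f a) : f.toSubgraph ≤ ψ.toSubgraph := by
  have : f.toHom = ψ.toHom.comp h := by ext a; simp [hψ]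
  rw [toSubgraph, toSubgraph, this, Subgraph.map_comp]
  exact Subgraph.map_mono le_top

theorem induce_range_le_toSubgraph (f : Copy A G) (ψ : Copy B G) (h : A ↪g B)
    (hψ : ∀ a, ψ (h a) = f a) : ψ.toSubgraph.induce (Set.range f) ≤ f.toSubgraph := by
  refine ⟨by simp, ?_⟩
  rintro _ _ ⟨⟨x, rfl⟩, ⟨y, rfl⟩, p, q, hpq, hp, hq⟩
  rw [← hψ] at hp hq
  obtain rfl := ψ.injective hp
  obtain rfl := ψ.injective hq
  exact ⟨x, y, h.map_adj_iff.mp hpq, rfl, rfl⟩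

theorem toSubgraph_eq_of_le [Finite α] {f f' : Copy A G} (h : f'.toSubgraph ≤ f.toSubgraph) :
    f'.toSubgraph = f.toSubgraph := by
  have hverts : f'.toSubgraph.verts = f.toSubgraph.verts := by
    have hsub := h.1
    rw [verts_toSubgraph, verts_toSubgraph] at hsub ⊢
    refine Set.eq_of_subset_of_ncard_le hsub ?_ (Set.finite_range _)
    rw [Set.ncard_range_of_injective (f := f) f.injective,
      Set.ncard_range_of_injective (f := f') f'.injective]
  have hedges : f'.toSubgraph.edgeSet = f.toSubgraph.edgeSet := by
    have hsub := Subgraph.edgeSet_mono h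
    simp only [toSubgraph, Subgraph.edgeSet_map, Subgraph.edgeSet_top] at hsub ⊢
    refine Set.eq_of_subset_of_ncard_le hsub ?_ ((Set.toFinite _).image _)
    rw [Set.ncard_image_of_injective _ (Sym2.map.injective f.injective),
      Set.ncard_image_of_injective _ (Sym2.map.injective f'.injective)]
  ext u v
  · rw [hverts]
  · rw [← Subgraph.mem_edgeSet, hedges, Subgraph.mem_edgeSet]

theorem exists_toSubgraph_eq {G' : G.Subgraph} (e : G'.coe ≃g A) :
    ∃ f : Copy A G, f.toSubgraph = G' :=
  (range_toSubgraph (A := A) ▸ ⟨e.symm⟩ : G' ∈ Set.range toSubgraph)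

end SimpleGraph.Copy

section Separation

variable {α V : Type*} {H : SimpleGraph α} {G : SimpleGraph V}

def IsolatesCopy (A : G.Subgraph) (f : Copy H G) (v : V) : Prop :=
  f.toSubgraph ≤ A ∧ A.induce (Set.range f) ≤ f.toSubgraph ∧ v ∉ A.verts

variable {F : Set G.Subgraph}

theorem stronglySeparatesCopies_of_forall_copy
    (hF : ∀ f₁ f₂ : Copy H G, f₁.toSubgraph ≠ f₂.toSubgraph →
      ∃ A ∈ F, f₁.toSubgraph ≤ A ∧ ¬ f₂.toSubgraph ≤ A) :
    StronglySeparatesCopies H G F := by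
  rintro _ _ ⟨e₁⟩ ⟨e₂⟩ hne
  obtain ⟨f₁, rfl⟩ := Copy.exists_toSubgraph_eq e₁
  obtain ⟨f₂, rfl⟩ := Copy.exists_toSubgraph_eq e₂
  obtain ⟨A₁, hA₁, h₁⟩ := hF f₁ f₂ hne
  obtain ⟨A₂, hA₂, h₂⟩ := hF f₂ f₁ hne.symm
  exact ⟨A₁, hA₁, A₂, hA₂, h₁.1, h₁.2, h₂.1, h₂.2⟩

theorem stronglySeparatesCopies_of_forall_notMem_range [Finite α]
    (hG : ∀ f : Copy H G, ∃ v, v ∉ Set.range f)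
    (hF : ∀ (f : Copy H G) (v), v ∉ Set.range f → ∃ A ∈ F, IsolatesCopy A f v) :
    StronglySeparatesCopies H G F := by
  refine stronglySeparatesCopies_of_forall_copy fun f₁ f₂ hne => ?_
  by_cases hr : Set.range f₂ ⊆ Set.range f₁
  · obtain ⟨v, hv⟩ := hG f₁
    obtain ⟨A, hA, hle, hind, -⟩ := hF f₁ v hv
    refine ⟨A, hA, hle, fun h₂ => hne (Copy.toSubgraph_eq_of_le ?_).symm⟩
    calc f₂.toSubgraph = f₂.toSubgraph.induce f₂.toSubgraph.verts :=
          Subgraph.induce_self_verts.symm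
      _ ≤ A.induce (Set.range f₁) := Subgraph.induce_mono h₂ (by simpa using hr)
      _ ≤ f₁.toSubgraph := hind
  · obtain ⟨v, hv₂, hv₁⟩ := Set.not_subset.mp hr
    obtain ⟨A, hA, hle, -, hvA⟩ := hF f₁ v hv₁
    exact ⟨A, hA, hle, fun h₂ => hvA (h₂.1 (by simpa using hv₂))⟩

end Separation

namespace balancedBlowup

variable {α β : Type*} {H : SimpleGraph α} {H' : SimpleGraph β}

def fst (H : SimpleGraph α) (k : ℕ) : balancedBlowup H k →g H := ⟨Prod.fst, id⟩

def sect {k : ℕ} (t : α → Fin k) : H ↪g balancedBlowup H k :=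
  ⟨⟨fun x => (x, t x), fun _ _ h => congrArg Prod.fst h⟩, Iff.rfl⟩

def isoOne (H : SimpleGraph α) : H ≃g balancedBlowup H 1 :=
  ⟨(Equiv.prodUnique α (Fin 1)).symm, Iff.rfl⟩

def copy {k n : ℕ} (e : H →g H') (ε : β → α × Fin k ↪ Fin n) :
    Copy (balancedBlowup H k) (balancedBlowup H' n) where
  toHom := ⟨fun p => (e p.1, ε (e p.1) p), fun h => e.map_adj h⟩
  injective' p q h := by
    obtain ⟨h₁, h₂⟩ := Prod.mk.inj h
    exact (ε _).injective (h₁ ▸ h₂)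

end balancedBlowup

section Slots

variable {α β : Type*} [Fintype α] {H : SimpleGraph α} {H' : SimpleGraph β}
  {n k : ℕ} (slot : α × Fin k ↪ Fin n)

/-- `some x` targets the `k` slots reserved for `x`, and `none` the slots reserved for nobody. -/
def slotTarget : Option α → Finset (Fin n)
  | none => (univ.map slot)ᶜ
  | some x => univ.map ((Embedding.sectR x (Fin k)).trans slot)

theorem pairwise_disjoint_slotTarget : Pairwise (Disjoint on slotTarget slot) := by
  have hsub (x : α) : slotTarget slot (some x) ⊆ univ.map slot := fun j hj => by
    obtain ⟨t, -, rfl⟩ := Finset.mem_map.mp hj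
    exact Finset.mem_map_of_mem _ (Finset.mem_univ _)
  rintro (_ | x) (_ | y) hne
  · exact absurd rfl hne
  · exact disjoint_compl_left.mono_right (hsub y)
  · exact (disjoint_compl_left.mono_right (hsub x)).symm
  · refine Finset.disjoint_left.mpr fun j hx hy => hne ?_
    obtain ⟨t, -, rfl⟩ := Finset.mem_map.mp hx
    obtain ⟨s, -, hs⟩ := Finset.mem_map.mp hy
    exact congrArg some (congrArg Prod.fst (slot.injective hs)).symm

theorem card_slotTarget_some (x : α) : #(slotTarget slot (some x)) = k := by
  simp [slotTarget]

theorem card_slotTarget_none : #(slotTarget slot none) = n - Fintype.card α * k := by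
  simp [slotTarget, Finset.card_compl]

def slotCopy (e : H →g H') (σ : β → Equiv.Perm (Fin n)) :
    Copy (balancedBlowup H k) (balancedBlowup H' n) :=
  balancedBlowup.copy e fun b => slot.trans (σ b).symm.toEmbedding

theorem exists_slotCopy_eq {e : H →g H'} {σ : β → Equiv.Perm (Fin n)} {x : α} {j : Fin n}
    (h : σ (e x) j ∈ slotTarget slot (some x)) : ∃ t, slotCopy slot e σ (x, t) = (e x, j) := by
  obtain ⟨t, -, ht⟩ := Finset.mem_map.mp h
  exact ⟨t, Prod.ext rfl ((Equiv.symm_apply_eq _).mpr ht)⟩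

theorem notMem_range_slotCopy {e : H →g H'} {σ : β → Equiv.Perm (Fin n)} {b : β} {j : Fin n}
    (h : σ b j ∈ slotTarget slot none) : (b, j) ∉ Set.range (slotCopy slot e σ) := by
  rintro ⟨p, hp⟩
  obtain ⟨rfl, rfl⟩ := Prod.mk.inj hp
  simp [slotTarget] at h

theorem isolatesCopy_slotCopy (f : Copy H (balancedBlowup H n)) {v : α × Fin n}
    {σ : α → Equiv.Perm (Fin n)}
    (hσ : ∀ y : Option α, σ (y.elim v f).1 (y.elim v f).2 ∈ slotTarget slot y) :
    IsolatesCopy (slotCopy slot ((balancedBlowup.fst H n).comp f.toHom) σ).toSubgraph f v := by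
  set ψ := slotCopy slot ((balancedBlowup.fst H n).comp f.toHom) σ
  choose t ht using fun x => exists_slotCopy_eq slot
    (e := (balancedBlowup.fst H n).comp f.toHom) (j := (f x).2) (hσ (some x))
  refine ⟨f.toSubgraph_le_of_comp ψ (balancedBlowup.sect t).toHom ht,
    f.induce_range_le_toSubgraph ψ (balancedBlowup.sect t) ht, ?_⟩
  rw [Copy.verts_toSubgraph]
  exact notMem_range_slotCopy slot (hσ none)

theorem card_pi_perm_le_card_slotTarget_mul [DecidableEq α] (hn : 2 * Fintype.card α * k ≤ n)
    (hn' : n ≤ 4 * Fintype.card α * k) {w : Option α → α × Fin n} (hw : Injective w) :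
    Fintype.card (α → Equiv.Perm (Fin n)) ≤
      Fintype.card {σ : α → Equiv.Perm (Fin n) // ∀ y, σ (w y).1 (w y).2 ∈ slotTarget slot y} *
        (4 * Fintype.card α) ^ (Fintype.card α + 1) := by
  rw [← Fintype.card_option]
  refine card_pi_perm_le_card_apply_mem_mul_pow hw
    (fun y y' _ hne => pairwise_disjoint_slotTarget slot hne) fun y => ?_
  rw [Fintype.card_fin]
  cases y with
  | none =>
    rw [card_slotTarget_none]
    have hhalf : n ≤ 2 * (n - Fintype.card α * k) := by rw [mul_assoc] at hn; omega
    rcases Nat.eq_zero_or_pos (Fintype.card α) with h0 | h0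
    · simp [h0] at hn'; omega
    · exact hhalf.trans (Nat.mul_le_mul_right _ (by omega))
  | some x => rw [card_slotTarget_some]; linarith

theorem exists_slot_cover [DecidableEq α] (hn : 2 * Fintype.card α * k ≤ n)
    (hn' : n ≤ 4 * Fintype.card α * k) {L : ℕ}
    (hL : (Fintype.card α * n) ^ (Fintype.card α + 1) *
      ((4 * Fintype.card α) ^ (Fintype.card α + 1) - 1) ^ L <
        ((4 * Fintype.card α) ^ (Fintype.card α + 1)) ^ L) :
    ∃ T : Fin L → α → Equiv.Perm (Fin n), ∀ w : Option α → α × Fin n, Injective w →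
      ∃ i, ∀ y, T i (w y).1 (w y).2 ∈ slotTarget slot y := by
  have hS : #(univ.filter fun w : Option α → α × Fin n => Injective w) ≤
      (Fintype.card α * n) ^ (Fintype.card α + 1) :=
    (Finset.card_filter_le _ _).trans (by simp)
  obtain ⟨T, hT⟩ := exists_forall_exists_of_card_mul_pow_lt
    (fun (σ : α → Equiv.Perm (Fin n)) (w : Option α → α × Fin n) =>
      ∀ y, σ (w y).1 (w y).2 ∈ slotTarget slot y) _
    (fun w hw => by
      rw [Nat.card_eq_fintype_card, mul_comm]
      exact card_pi_perm_le_card_slotTarget_mul slot hn hn' (Finset.mem_filter.mp hw).2)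
    (lt_of_le_of_lt (Nat.mul_le_mul_right _ hS) hL)
  exact ⟨T, fun w hw => hT w (Finset.mem_filter.mpr ⟨Finset.mem_univ _, hw⟩)⟩

end Slots

section Family

variable {α : Type*} [Fintype α] (H : SimpleGraph α)

def IsSeparatingBlowupFamily (n : ℕ) (F : Set (balancedBlowup H n).Subgraph) : Prop :=
  F.Finite ∧ (∀ A ∈ F, ∃ k : ℕ, 1 ≤ k ∧ Nonempty (A.coe ≃g balancedBlowup H k)) ∧
    StronglySeparatesCopies H (balancedBlowup H n) F

theorem exists_isSeparatingBlowupFamily_of_copies (n : ℕ) :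
    ∃ F, IsSeparatingBlowupFamily H n F ∧ F.ncard ≤ (Fintype.card α * n) ^ Fintype.card α := by
  have : Finite (Copy H (balancedBlowup H n)) := DFunLike.finite _
  refine ⟨Set.range (Copy.toSubgraph (A := H)), ⟨Set.finite_range _, ?_, ?_⟩, ?_⟩
  · rintro _ ⟨f, rfl⟩
    exact ⟨1, le_rfl, ⟨f.isoToSubgraph.symm.trans (balancedBlowup.isoOne H)⟩⟩
  · exact stronglySeparatesCopies_of_forall_copy fun f₁ f₂ hne =>
      ⟨f₁.toSubgraph, ⟨f₁, rfl⟩, le_rfl, fun h => hne (Copy.toSubgraph_eq_of_le h).symm⟩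
  · calc (Set.range (Copy.toSubgraph (A := H))).ncard ≤ Nat.card (Copy H (balancedBlowup H n)) :=
          Finite.card_range_le _
      _ ≤ Nat.card (α → α × Fin n) := Nat.card_le_card_of_injective _ DFunLike.coe_injective
      _ = _ := by simp [Nat.card_fun]

theorem exists_isSeparatingBlowupFamily_of_slot_cover [Nonempty α] {n k L : ℕ} (hn : 2 ≤ n)
    (hk : 1 ≤ k) (slot : α × Fin k ↪ Fin n) (T : Fin L → α → Equiv.Perm (Fin n))
    (hT : ∀ w : Option α → α × Fin n, Injective w →
      ∃ i, ∀ y, T i (w y).1 (w y).2 ∈ slotTarget slot y) :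
    ∃ F, IsSeparatingBlowupFamily H n F ∧ F.ncard ≤ Fintype.card α ^ Fintype.card α * L := by
  have : Nontrivial (Fin n) := Fin.nontrivial_iff_two_le.mpr hn
  refine ⟨Set.range fun p : (H →g H) × Fin L => (slotCopy slot p.1 (T p.2)).toSubgraph,
    ⟨Set.finite_range _, ?_, ?_⟩, ?_⟩
  · rintro _ ⟨p, rfl⟩
    exact ⟨k, hk, ⟨(slotCopy slot p.1 (T p.2)).isoToSubgraph.symm⟩⟩
  · refine stronglySeparatesCopies_of_forall_notMem_range (fun f => exists_notMem_range_prod f)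
      fun f v hv => ?_
    obtain ⟨i, hi⟩ := hT _ (Option.elim_injective f.injective hv)
    exact ⟨_, ⟨((balancedBlowup.fst H n).comp f.toHom, i), rfl⟩, isolatesCopy_slotCopy slot f hi⟩
  · calc _ ≤ Nat.card ((H →g H) × Fin L) := Finite.card_range_le _
      _ ≤ Nat.card (α → α) * L := by
          rw [Nat.card_prod, Nat.card_fin]
          exact Nat.mul_le_mul_right _ (Nat.card_le_card_of_injective _ DFunLike.coe_injective)
      _ = _ := by simp [Nat.card_fun]

theorem exists_isSeparatingBlowupFamily_of_two_mul_card_le [Nonempty α] {n L : ℕ}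
    (hn : 2 * Fintype.card α ≤ n)
    (hL : (Fintype.card α * n) ^ (Fintype.card α + 1) *
      ((4 * Fintype.card α) ^ (Fintype.card α + 1) - 1) ^ L <
        ((4 * Fintype.card α) ^ (Fintype.card α + 1)) ^ L) :
    ∃ F, IsSeparatingBlowupFamily H n F ∧ F.ncard ≤ Fintype.card α ^ Fintype.card α * L := by
  classical
  obtain ⟨k, hk, hlow, hhigh⟩ := exists_two_mul_mul_le_le_four_mul_mul Fintype.card_pos hn
  obtain ⟨slot⟩ : Nonempty (α × Fin k ↪ Fin n) := Function.Embedding.nonempty_of_card_le (by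
    simp only [Fintype.card_prod, Fintype.card_fin]; nlinarith)
  obtain ⟨T, hT⟩ := exists_slot_cover slot hlow hhigh hL
  exact exists_isSeparatingBlowupFamily_of_slot_cover H
    (le_trans (by linarith [Fintype.card_pos (α := α)]) hn) hk slot T hT

theorem exists_isSeparatingBlowupFamily_ncard_le [Nonempty α] :
    ∃ M K : ℕ, 0 < M ∧ ∀ n : ℕ, 2 ≤ n →
      ∃ F, IsSeparatingBlowupFamily H n F ∧ F.ncard ≤ M * (⌊K * Real.log n⌋₊ + 1) := by
  set m := Fintype.card α with hm
  have hm0 : 0 < m := Fintype.card_pos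
  set D := (4 * m) ^ (m + 1)
  refine ⟨(2 * m * m) ^ m, 2 * (m + 1) * D, by positivity, fun n hn => ?_⟩
  rcases lt_or_ge n (2 * m) with hsmall | hlarge
  · obtain ⟨F, hF, hcard⟩ := exists_isSeparatingBlowupFamily_of_copies H n
    refine ⟨F, hF, hcard.trans ?_⟩
    calc (m * n) ^ m ≤ (2 * m * m) ^ m := Nat.pow_le_pow_left (by nlinarith) m
      _ ≤ _ := Nat.le_mul_of_pos_right _ (Nat.succ_pos _)
  · set L := ⌊((2 * (m + 1) * D : ℕ) : ℝ) * Real.log n⌋₊ + 1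
    have hlogN : Real.log ((m * n) ^ (m + 1) : ℕ) ≤ 2 * (m + 1) * Real.log n := by
      have hmn : ((m * n : ℕ) : ℝ) ≤ (n : ℝ) ^ 2 := by
        push_cast; rw [sq]; gcongr; exact_mod_cast (by omega : m ≤ n)
      have : Real.log (m * n : ℕ) ≤ 2 * Real.log n := by
        calc Real.log (m * n : ℕ) ≤ Real.log ((n : ℝ) ^ 2) :=
              Real.log_le_log (by positivity) hmn
          _ = 2 * Real.log n := by rw [Real.log_pow]; norm_num
      rw [Nat.cast_pow, Real.log_pow]
      push_cast at this ⊢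
      nlinarith
    have hL : D * Real.log ((m * n) ^ (m + 1) : ℕ) < L := by
      calc (D : ℝ) * Real.log ((m * n) ^ (m + 1) : ℕ) ≤ D * (2 * (m + 1) * Real.log n) := by
            gcongr
        _ = ((2 * (m + 1) * D : ℕ) : ℝ) * Real.log n := by push_cast; ring
        _ < L := by simp only [L]; push_cast; exact Nat.lt_floor_add_one _
    obtain ⟨F, hF, hcard⟩ := exists_isSeparatingBlowupFamily_of_two_mul_card_le H hlarge
      (mul_sub_one_pow_lt_pow_of_mul_log_lt (Nat.one_le_iff_ne_zero.mpr (by positivity)) hL)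
    exact ⟨F, hF, hcard.trans (Nat.mul_le_mul_right _ (Nat.pow_le_pow_left (by nlinarith) m))⟩

end Family

/-- For every graph `H` with at least one edge there is a constant `C > 0` such that for
every `n ≥ 2`, the `n`-balanced blowup of `H` admits a family of at most `C·log n`
subgraphs, each isomorphic to a balanced blowup of `H`, that strongly separates the
copies of `H` in it. -/
theorem blowup_copy_separating_system
    (α : Type) [Fintype α] (H : SimpleGraph α) (hH : H.edgeSet.Nonempty) :
    ∃ C : ℝ, 0 < C ∧
      ∀ n : ℕ, 2 ≤ n →
        ∃ F : Set (balancedBlowup H n).Subgraph,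
          F.Finite ∧
          (∀ A ∈ F, ∃ k : ℕ, 1 ≤ k ∧ Nonempty (A.coe ≃g balancedBlowup H k)) ∧
          StronglySeparatesCopies H (balancedBlowup H n) F ∧
          (F.ncard : ℝ) ≤ C * Real.log n := by
  have : Nonempty α := by
    obtain ⟨⟨x, -⟩, -⟩ := hH
    exact ⟨x⟩
  obtain ⟨M, K, hM, hF⟩ := exists_isSeparatingBlowupFamily_ncard_le H
  refine ⟨M * (K + 1 / Real.log 2), by positivity, fun n hn => ?_⟩
  obtain ⟨F, ⟨hfin, hblowup, hsep⟩, hcard⟩ := hF n hn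
  refine ⟨F, hfin, hblowup, hsep, ?_⟩
  calc (F.ncard : ℝ) ≤ M * (⌊K * Real.log n⌋₊ + 1 : ℝ) := by exact_mod_cast hcard
    _ ≤ M * ((K + 1 / Real.log 2) * Real.log n) := by
        gcongr; exact floor_mul_log_add_one_le (Nat.cast_nonneg K) hn
    _ = _ := by ring
end

section
/- For every ε ∈ (0,1) there exist a constant c > 0 and n₀ such that for every n ≥ n₀, the edge set of every graph G on n vertices can be partitioned into a collection of at most (n/(c·log n))² pairwise edge-disjoint subgraphs of G each isomorphic to the balanced complete bipartite graph K_{m,m} with m = ⌈c·log n⌉, together with a set of at most ε·n² remaining single edges. -/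
/-!
A graph on `n` vertices with at least `ε n²` edges has at least `ε n` vertices of degree at least
`ε n`. If no `m`-set of vertices had `m` common neighbours, counting the pairs formed by a vertex and
an `m`-subset of its neighbourhood would give `ε n (ε n / 2)^m ≤ ∑ (deg v)_m ≤ m n^m`, which fails
for `m = ⌈c log n⌉`, `c = 1 / (2 log (2 / ε))` and `n` large. So every graph with more than `ε n²`
edges contains `K_{m,m}`. Removing copies of `K_{m,m}` greedily therefore leaves at most `ε n²`
edges, and as each copy has `m² ≥ (c log n)²` edges, there are at most `(n / (c log n))²` copies.
-/

open Finset Filter Real Asymptotics SimpleGraph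

namespace SimpleGraph

section Copies

variable {V W : Type*}

theorem ncard_edgeSet_completeBipartiteGraph [Finite V] [Finite W] :
    (completeBipartiteGraph V W).edgeSet.ncard = Nat.card V * Nat.card W := by
  rw [Set.ncard_def, encard_edgeSet_completeBipartiteGraph]
  simp [ENat.card_eq_coe_natCard]

theorem exists_subgraph_iso_of_isContained {F : SimpleGraph W} {G H : SimpleGraph V}
    (hHG : H ≤ G) (hF : F ⊑ H) :
    ∃ A : G.Subgraph, Nonempty (A.coe ≃g F) ∧ A.edgeSet ⊆ H.edgeSet ∧
      A.edgeSet.ncard = F.edgeSet.ncard := by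
  obtain ⟨f⟩ := hF
  let g := (Copy.ofLE H G hHG).comp f
  have hg : g.toSubgraph.edgeSet = Sym2.map f '' F.edgeSet := by simp [g]
  refine ⟨g.toSubgraph, ⟨g.isoToSubgraph.symm⟩, ?_, ?_⟩
  · rw [hg]
    rintro _ ⟨e, he, rfl⟩
    exact f.toHom.map_mem_edgeSet he
  · rw [hg]
    exact Set.ncard_image_of_injective _ (Sym2.map.injective f.injective)

end Copies

section Packing

variable {V W : Type*} [Finite V] {G : SimpleGraph V} {F : SimpleGraph W} {t : ℝ}

theorem exists_edgeDisjoint_copies (hF : 0 < F.edgeSet.ncard)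
    (hdense : ∀ H ≤ G, t < H.edgeSet.ncard → F ⊑ H) :
    ∀ H ≤ G, ∃ K : Finset G.Subgraph,
      (∀ A ∈ K, Nonempty (A.coe ≃g F) ∧ A.edgeSet ⊆ H.edgeSet) ∧
      (K : Set G.Subgraph).PairwiseDisjoint Subgraph.edgeSet ∧
      #K * F.edgeSet.ncard ≤ H.edgeSet.ncard ∧
      ((H.edgeSet \ ⋃ A ∈ K, A.edgeSet).ncard : ℝ) ≤ t := by
  classical
  intro H hHG
  induction hn : H.edgeSet.ncard using Nat.strong_induction_on generalizing H with
  | _ n ih =>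
  rcases le_or_gt (H.edgeSet.ncard : ℝ) t with hsparse | hmany
  · exact ⟨∅, by simp, by simp, by simp, by simpa using hsparse⟩
  obtain ⟨A, hAF, hAH, hAcard⟩ := exists_subgraph_iso_of_isContained hHG (hdense H hHG hmany)
  have hA : A.edgeSet.Nonempty := Set.nonempty_of_ncard_ne_zero (by omega)
  have hsplit := Set.ncard_sdiff_add_ncard_of_subset hAH
  rw [← edgeSet_deleteEdges] at hsplit
  obtain ⟨K, hK, hdisj, hcard, hrest⟩ :=
    ih _ (by omega) (H.deleteEdges A.edgeSet) (deleteEdges_le _ |>.trans hHG) rfl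
  simp only [edgeSet_deleteEdges, Set.subset_sdiff] at hK
  have hAK : A ∉ K := fun hAK ↦ hA.ne_empty (disjoint_self.mp (hK A hAK).2.2)
  refine ⟨insert A K, ?_, ?_, ?_, ?_⟩
  · simp only [mem_insert, forall_eq_or_imp]
    exact ⟨⟨hAF, hAH⟩, fun B hB ↦ ⟨(hK B hB).1, (hK B hB).2.1⟩⟩
  · rw [coe_insert]
    exact hdisj.insert fun B hB _ ↦ (hK B hB).2.2.symm
  · rw [card_insert_of_notMem hAK, add_one_mul]
    omega
  · rwa [set_biUnion_insert, ← Set.sdiff_sdiff, ← edgeSet_deleteEdges]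

end Packing

section Counting

variable {V : Type*} [Fintype V] (G : SimpleGraph V) [DecidableRel G.Adj]

theorem ncard_edgeSet_le_card_sq : G.edgeSet.ncard ≤ Fintype.card V ^ 2 := by
  rw [← coe_edgeFinset, Set.ncard_coe_finset]
  exact card_edgeFinset_le_card_choose_two.trans (Nat.choose_le_pow _ _)

theorem two_mul_card_edgeFinset_le {δ : ℝ} (hδ : 0 ≤ δ) :
    2 * (#G.edgeFinset : ℝ) ≤ Fintype.card V * (#{v | δ ≤ G.degree v} + δ) := by
  have hsplit := sum_filter_add_sum_filter_not univ (fun v ↦ δ ≤ G.degree v)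
    (fun v ↦ (G.degree v : ℝ))
  have hhigh : ∑ v with δ ≤ G.degree v, (G.degree v : ℝ) ≤
      #{v | δ ≤ G.degree v} * Fintype.card V := by
    grw [sum_le_card_nsmul _ _ (Fintype.card V : ℝ) fun v _ ↦ by
      exact_mod_cast (G.degree_lt_card_verts v).le]
    simp
  have hlow : ∑ v with ¬ δ ≤ G.degree v, (G.degree v : ℝ) ≤ Fintype.card V * δ := by
    grw [sum_le_card_nsmul _ _ δ fun v hv ↦ (not_le.mp (mem_filter.mp hv).2).le,
      card_le_univ]
    simp
  have hsum : ∑ v, (G.degree v : ℝ) = 2 * #G.edgeFinset := by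
    exact_mod_cast G.sum_degrees_eq_twice_card_edges
  linarith

variable [DecidableEq V]

theorem sum_choose_degree_eq (m : ℕ) :
    ∑ v, (G.degree v).choose m =
      ∑ s ∈ powersetCard m univ, #{v | s ⊆ G.neighborFinset v} := by
  have (v : V) :
      (G.degree v).choose m = #{s ∈ powersetCard m univ | s ⊆ G.neighborFinset v} := by
    rw [← card_neighborFinset_eq_degree, ← card_powersetCard]
    congr 1
    ext s
    simp [and_comm]
  simp only [this]
  exact sum_card_bipartiteAbove_eq_sum_card_bipartiteBelow _

theorem sum_descFactorial_degree_le {m k : ℕ}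
    (h : ∀ s : Finset V, #s = m → #{v | s ⊆ G.neighborFinset v} ≤ k) :
    ∑ v, (G.degree v).descFactorial m ≤ Fintype.card V ^ m * k := by
  calc ∑ v, (G.degree v).descFactorial m
      = m.factorial * ∑ s ∈ powersetCard m univ, #{v | s ⊆ G.neighborFinset v} := by
        simp only [Nat.descFactorial_eq_factorial_mul_choose, ← mul_sum, sum_choose_degree_eq]
    _ ≤ m.factorial * ((Fintype.card V).choose m * k) := by
        grw [sum_le_card_nsmul _ _ k fun s hs ↦ h s (mem_powersetCard.mp hs).2]
        simp
    _ ≤ Fintype.card V ^ m * k := by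
        rw [← mul_assoc, ← Nat.descFactorial_eq_factorial_mul_choose]
        gcongr
        exact Nat.descFactorial_le_pow _ _

theorem completeBipartiteGraph_isContained_of_le_card_edgeFinset {ε : ℝ} {m : ℕ} (hε : 0 ≤ ε)
    (hm : (m : ℝ) ≤ ε * Fintype.card V / 2)
    (hmn : m * (Fintype.card V : ℝ) ^ m < (ε * Fintype.card V / 2) ^ (m + 1))
    (hG : ε * Fintype.card V ^ 2 ≤ #G.edgeFinset) :
    completeBipartiteGraph (Fin m) (Fin m) ⊑ G := by
  set n := Fintype.card V
  have hx0 : 0 ≤ ε * n / 2 := by positivity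
  set x := ε * n / 2 with hx
  obtain ⟨s, hs, hsm⟩ : ∃ s : Finset V, #s = m ∧ m ≤ #{v | s ⊆ G.neighborFinset v} := by
    by_contra! hsmall
    have hupper : (∑ v, (G.degree v).descFactorial m : ℝ) ≤ n ^ m * m := by
      exact_mod_cast G.sum_descFactorial_degree_le fun s hs ↦ (hsmall s hs).le
    have hlower : #{v | ε * n ≤ G.degree v} * x ^ m ≤
        (∑ v, (G.degree v).descFactorial m : ℝ) := by
      calc #{v | ε * n ≤ G.degree v} * x ^ m
          = ∑ v with ε * n ≤ G.degree v, x ^ m := by simp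
        _ ≤ ∑ v with ε * n ≤ G.degree v, ((G.degree v).descFactorial m : ℝ) := by
            refine sum_le_sum fun v hv ↦ ?_
            have hdeg : ε * n ≤ G.degree v := (mem_filter.mp hv).2
            have hmdeg : m ≤ G.degree v + 1 := by
              exact_mod_cast (by linarith : (m : ℝ) ≤ G.degree v + 1)
            calc x ^ m ≤ ((G.degree v + 1 - m : ℕ) : ℝ) ^ m := by
                  gcongr
                  push_cast [hmdeg]
                  linarith
              _ ≤ _ := by exact_mod_cast Nat.pow_sub_le_descFactorial _ _
        _ ≤ ∑ v, ((G.degree v).descFactorial m : ℝ) :=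
            sum_le_sum_of_subset_of_nonneg (filter_subset _ _) fun _ _ _ ↦ by positivity
    have hWx : (#{v | ε * n ≤ G.degree v} : ℝ) < x := by
      refine lt_of_mul_lt_mul_left ?_ (by positivity : 0 ≤ x ^ m)
      rw [← pow_succ]
      linarith
    have hW : 2 * (#G.edgeFinset : ℝ) ≤ n * (#{v | ε * n ≤ G.degree v} + ε * n) :=
      G.two_mul_card_edgeFinset_le (by positivity)
    have hεn : 0 < ε * n := by
      linarith [(Nat.cast_nonneg _ : (0 : ℝ) ≤ #{v | ε * n ≤ G.degree v})]
    have hn : 0 < (n : ℝ) := pos_of_mul_pos_right hεn hε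
    nlinarith
  obtain ⟨t, hts, ht⟩ := exists_subset_card_eq hsm
  refine completeBipartiteGraph_isContained_iff.mpr ⟨s, t, by simpa, by simpa, ?_⟩
  intro u hu v hv
  exact (G.mem_neighborFinset _ _).mp ((mem_filter.mp (hts hv)).2 hu) |>.symm

end Counting

end SimpleGraph

theorem eventually_mul_log_add_one_le_mul_sqrt (c : ℝ) {a : ℝ} (ha : 0 < a) :
    ∀ᶠ x in atTop, c * log x + 1 ≤ a * √x := by
  have hlog : (fun x ↦ c * log x + 1) =o[atTop] fun x ↦ x ^ (1 / 2 : ℝ) :=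
    ((isLittleO_log_rpow_atTop (by norm_num)).const_mul_left c).add
      ((isLittleO_one_left_iff ℝ).mpr <| (tendsto_rpow_atTop (by norm_num)).congr' <|
        (eventually_ge_atTop 0).mono fun x hx ↦ (norm_of_nonneg (by positivity)).symm)
  filter_upwards [hlog.bound ha, eventually_ge_atTop 0] with x hx hx0
  rw [sqrt_eq_rpow, ← norm_of_nonneg (by positivity : 0 ≤ x ^ (1 / 2 : ℝ))]
  exact (le_abs_self _).trans hx

theorem half_sq_mul_sqrt_lt_half_pow_mul {ε c x : ℝ} {m : ℕ} (hε : 0 < ε) (hε2 : ε < 2)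
    (hc : c * log (2 / ε) ≤ 1 / 2) (hx : 1 ≤ x) (hm : (m : ℝ) < c * log x + 1) :
    (ε / 2) ^ 2 * √x < (ε / 2) ^ (m + 1) * x := by
  set L := log (2 / ε)
  have hL : 0 < L := log_pos ((one_lt_div hε).mpr hε2)
  have hlogx : 0 ≤ log x := log_nonneg hx
  have hεL : ε / 2 = exp (-L) := by rw [exp_neg, exp_log (by positivity), inv_div]
  have hsqrt : √x = exp (log x / 2) := by
    rw [sqrt_eq_rpow, rpow_def_of_pos (by linarith)]
    ring_nf
  rw [hεL, hsqrt, ← exp_nat_mul, ← exp_nat_mul, ← exp_log (by linarith : 0 < x), ← exp_add,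
    ← exp_add, log_exp]
  apply exp_lt_exp.mpr
  push_cast
  -- `(m + 1) L < (c log x + 2) L ≤ log x / 2 + 2 L`
  nlinarith

theorem eventually_ceil_mul_log_mul_pow_lt {ε c : ℝ} (hε : 0 < ε) (hε2 : ε < 2) (hc : 0 < c)
    (hcε : c * log (2 / ε) ≤ 1 / 2) :
    ∀ᶠ n : ℕ in atTop, 0 < c * log n ∧ (⌈c * log n⌉₊ : ℝ) ≤ ε * n / 2 ∧
      ⌈c * log n⌉₊ * (n : ℝ) ^ ⌈c * log n⌉₊ < (ε * n / 2) ^ (⌈c * log n⌉₊ + 1) := by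
  filter_upwards [tendsto_natCast_atTop_atTop.eventually
    (eventually_mul_log_add_one_le_mul_sqrt c (by positivity : 0 < (ε / 2) ^ 2)),
    eventually_ge_atTop 2] with n hsqrt hn
  have hn1 : (1 : ℝ) < n := by exact_mod_cast hn
  have hclog : 0 < c * log n := mul_pos hc (log_pos hn1)
  set m := ⌈c * log n⌉₊
  have hm : (m : ℝ) < c * log n + 1 := Nat.ceil_lt_add_one hclog.le
  refine ⟨hclog, ?_, ?_⟩
  · calc (m : ℝ) ≤ (ε / 2) ^ 2 * √n := by linarith
      _ ≤ ε / 2 * n := by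
          gcongr
          · exact pow_le_of_le_one (by positivity) (by linarith) two_ne_zero
          · exact sqrt_le_self_iff.mpr (Or.inr hn1.le)
      _ = ε * n / 2 := by ring
  · calc m * (n : ℝ) ^ m ≤ (ε / 2) ^ 2 * √n * n ^ m := by gcongr; linarith
      _ < (ε / 2) ^ (m + 1) * n * n ^ m :=
          mul_lt_mul_of_pos_right (half_sq_mul_sqrt_lt_half_pow_mul hε hε2 hcε hn1.le hm)
            (by positivity)
      _ = (ε * n / 2) ^ (m + 1) := by ring

/-- Kővári–Sós–Turán covering consequence: for every `ε ∈ (0,1)` there are `c > 0` and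
`n₀` such that for every `n ≥ n₀`, the edge set of every graph `G` on `n` vertices can be
partitioned into at most `(n/(c·log n))²` pairwise edge-disjoint copies of
`K_{m,m}` with `m = ⌈c·log n⌉`, together with at most `ε·n²` remaining single edges. -/
theorem kst_balanced_bipartite_edge_partition :
    ∀ ε : ℝ, 0 < ε → ε < 1 →
      ∃ (c : ℝ) (n₀ : ℕ), 0 < c ∧
        ∀ n : ℕ, n₀ ≤ n →
          ∀ (V : Type) [Fintype V], Fintype.card V = n →
            ∀ G : SimpleGraph V,
              ∃ (K : Set G.Subgraph) (R : Set (Sym2 V)),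
                K.Finite ∧ R ⊆ G.edgeSet ∧
                (∀ A ∈ K, Nonempty (A.coe ≃g
                  completeBipartiteGraph (Fin ⌈c * Real.log n⌉₊) (Fin ⌈c * Real.log n⌉₊))) ∧
                (∀ A ∈ K, ∀ B ∈ K, A ≠ B → A.edgeSet ∩ B.edgeSet = ∅) ∧
                (∀ A ∈ K, A.edgeSet ∩ R = ∅) ∧
                ((⋃ A ∈ K, A.edgeSet) ∪ R = G.edgeSet) ∧
                (K.ncard : ℝ) ≤ ((n : ℝ) / (c * Real.log n)) ^ 2 ∧
                (R.ncard : ℝ) ≤ ε * (n : ℝ) ^ 2 := by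
  intro ε hε hε1
  have hL : 0 < log (2 / ε) := log_pos ((one_lt_div hε).mpr (by linarith))
  set c := (2 * log (2 / ε))⁻¹
  have hc : 0 < c := by positivity
  obtain ⟨n₀, hn₀⟩ := eventually_atTop.mp
    (eventually_ceil_mul_log_mul_pow_lt hε (by linarith) hc (by simp only [c]; field_simp; rfl))
  refine ⟨c, n₀, hc, fun n hn V _ hV G ↦ ?_⟩
  classical
  obtain ⟨hclog, hmε, hmn⟩ := hn₀ n hn
  subst hV
  set m := ⌈c * log (Fintype.card V)⌉₊
  have hF : 0 < (completeBipartiteGraph (Fin m) (Fin m)).edgeSet.ncard := by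
    simp [ncard_edgeSet_completeBipartiteGraph, m, hclog]
  obtain ⟨K, hK, hdisj, hcard, hrest⟩ := exists_edgeDisjoint_copies hF
    (fun H _ hH ↦ H.completeBipartiteGraph_isContained_of_le_card_edgeFinset hε.le hmε hmn
      (by rw [← coe_edgeFinset, Set.ncard_coe_finset] at hH; exact hH.le)) G le_rfl
  refine ⟨K, G.edgeSet \ ⋃ A ∈ K, A.edgeSet, K.finite_toSet, Set.sdiff_subset,
    fun A hA ↦ (hK A hA).1, fun A hA B hB hAB ↦ (hdisj hA hB hAB).inter_eq,
    fun A hA ↦ (Set.disjoint_sdiff_right.mono_left (Set.subset_biUnion_of_mem hA)).inter_eq,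
    Set.union_sdiff_cancel (Set.iUnion₂_subset fun A hA ↦ (hK A hA).2), ?_, hrest⟩
  rw [Set.ncard_coe_finset, div_pow, le_div_iff₀ (by positivity)]
  calc (#K : ℝ) * (c * log (Fintype.card V)) ^ 2 ≤ #K * (m : ℝ) ^ 2 := by
        gcongr
        exact Nat.le_ceil _
    _ ≤ (Fintype.card V : ℝ) ^ 2 := by
        rw [ncard_edgeSet_completeBipartiteGraph, Nat.card_fin, ← sq] at hcard
        exact_mod_cast hcard.trans G.ncard_edgeSet_le_card_sq
end

section
/- Let H be a 2-connected graph. There exists a constant C_H > 0 such that every connected graph G on n ≥ 2 vertices admits a family F of connected subgraphs of G with |F| ≤ C_H·log n that strongly separates the copies of H in G: for any two distinct subgraphs H₁, H₂ of G isomorphic to H there exist F₁, F₂ ∈ F with H₁ ⊆ F₁, H₂ ⊄ F₁, H₂ ⊆ F₂ and H₁ ⊄ F₂. -/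
/-!
Encode a subgraph of `G` by its set of vertices and edges, a subset of `V ⊕ Sym2 V`. If `A ≠ B`
are copies of `H`, then `B` has a vertex or edge `z` outside `A`, so a uniformly random set `T`
contains `A` and misses `z` with probability `2 ^ -(|V(H)| + |E(H)| + 1)`, a constant. There are at
most `n ^ (2 |V(H)|)` ordered pairs of copies, so by a union bound `O(log n)` random sets separate
all of them. Each such subgraph is made connected by repeatedly adding an edge of `G` between two of
its components. That edge is a bridge of the new subgraph, and a copy of a 2-connected graph uses no
bridge and has no isolated vertex, so no new copy of `H` appears.
-/

open SimpleGraph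

/-- `G` is 2-connected: it has more than 2 vertices and stays connected after deleting
any single vertex. -/
def TwoConnected {V : Type*} [Fintype V] (G : SimpleGraph V) : Prop :=
  2 < Fintype.card V ∧ ∀ v : V, (G.induce {v}ᶜ).Connected

open Finset

lemma Fintype.exists_ne_and_ne_of_two_lt_card {α : Type*} [Fintype α]
    (h : 2 < Fintype.card α) (x y : α) : ∃ z, z ≠ x ∧ z ≠ y := by
  classical
  obtain ⟨z, -, hz⟩ := exists_mem_notMem_of_card_lt_card (s := {x, y}) (t := univ)
    (card_le_two.trans_lt h)
  exact ⟨z, by simpa [not_or] using hz⟩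

lemma Finset.two_pow_card_eq_mul_card_Icc_erase {β : Type*} [Fintype β] [DecidableEq β]
    {s : Finset β} {z : β} (hz : z ∉ s) :
    2 ^ Fintype.card β = 2 ^ (#s + 1) * #(Icc s (univ.erase z)) := by
  have hs : s ⊆ univ.erase z := fun x hx => mem_erase.mpr ⟨ne_of_mem_of_not_mem hx hz, mem_univ x⟩
  have hcard : #s ≤ Fintype.card β - 1 := by
    simpa [card_erase_of_mem] using card_le_card hs
  have hpos : 0 < Fintype.card β := Fintype.card_pos_iff.mpr ⟨z⟩
  rw [card_Icc_finset hs, card_erase_of_mem (mem_univ z), card_univ, ← pow_add]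
  congr 1
  omega

/-- The union bound over `m` independent uniform samples from `Ω`. -/
lemma Finset.exists_forall_exists_of_card_mul_pow_lt {ι Ω : Type*} [Fintype Ω] [Nonempty Ω]
    (good : ι → Ω → Prop) [∀ p, DecidablePred (good p)] (P : Finset ι) {c : ℝ} (m : ℕ)
    (hgood : ∀ p ∈ P, c * Fintype.card Ω ≤ #{ω | good p ω}) (hP : #P * (1 - c) ^ m < 1) :
    ∃ ω : Fin m → Ω, ∀ p ∈ P, ∃ i, good p (ω i) := by
  classical
  by_contra! h
  let bad p : Finset Ω := {ω | ¬ good p ω}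
  have hcover : (univ : Finset (Fin m → Ω)) ⊆
      P.biUnion fun p => Fintype.piFinset fun _ => bad p := by
    intro ω _
    obtain ⟨p, hp, hω⟩ := h ω
    exact mem_biUnion.mpr ⟨p, hp, Fintype.mem_piFinset.mpr fun i => by simp [bad, hω i]⟩
  have hbad : ∀ p ∈ P, (#(bad p) : ℝ) ≤ (1 - c) * Fintype.card Ω := by
    intro p hp
    have hsplit := card_filter_add_card_filter_not (s := univ) (good p)
    rw [card_univ] at hsplit
    have : (#(bad p) : ℝ) = Fintype.card Ω - #{ω | good p ω} := by
      rw [← hsplit]; push_cast; ring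
    linarith [hgood p hp]
  have hcount : (Fintype.card Ω : ℝ) ^ m ≤ #P * ((1 - c) * Fintype.card Ω) ^ m :=
    calc (Fintype.card Ω : ℝ) ^ m = #(univ : Finset (Fin m → Ω)) := by simp
      _ ≤ #(P.biUnion fun p => Fintype.piFinset fun _ => bad p) := by
        exact_mod_cast card_le_card hcover
      _ ≤ ∑ p ∈ P, #(Fintype.piFinset fun _ : Fin m => bad p) := by
        exact_mod_cast card_biUnion_le
      _ ≤ ∑ p ∈ P, ((1 - c) * Fintype.card Ω) ^ m := by
        push_cast [Fintype.card_piFinset, prod_const, card_univ, Fintype.card_fin]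
        exact sum_le_sum fun p hp => pow_le_pow_left₀ (Nat.cast_nonneg _) (hbad p hp) m
      _ = #P * ((1 - c) * Fintype.card Ω) ^ m := by simp
  have hΩ : 0 < (Fintype.card Ω : ℝ) ^ m := by positivity
  rw [mul_pow, ← mul_assoc] at hcount
  nlinarith

lemma Real.exists_pos_forall_exists_le_mul_log_and_pow_mul_pow_lt_one {q : ℝ} (hq₀ : 0 < q)
    (hq₁ : q < 1) (d : ℕ) :
    ∃ C > 0, ∀ x : ℝ, 2 ≤ x → ∃ m : ℕ, m ≤ C * Real.log x ∧ x ^ d * q ^ m < 1 := by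
  have hL : 0 < -Real.log q := neg_pos.mpr (Real.log_neg hq₀ hq₁)
  have hlog2 : 0 < Real.log 2 := Real.log_pos one_lt_two
  refine ⟨d / -Real.log q + 1 / Real.log 2, by positivity, fun x hx => ?_⟩
  have hlogx : Real.log 2 ≤ Real.log x := Real.log_le_log two_pos hx
  set t := d * Real.log x / -Real.log q
  have ht : 0 ≤ t := div_nonneg (mul_nonneg d.cast_nonneg (by linarith)) hL.le
  refine ⟨⌊t⌋₊ + 1, ?_, ?_⟩
  · have : 1 ≤ Real.log x / Real.log 2 := (one_le_div hlog2).mpr hlogx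
    calc ((⌊t⌋₊ + 1 : ℕ) : ℝ) ≤ t + Real.log x / Real.log 2 := by
          push_cast; linarith [Nat.floor_le ht]
      _ = (d / -Real.log q + 1 / Real.log 2) * Real.log x := by ring
  · have hm : d * Real.log x < (⌊t⌋₊ + 1 : ℕ) * -Real.log q := by
      rw [← div_lt_iff₀ hL]; exact_mod_cast Nat.lt_floor_add_one t
    have hx0 : 0 < x := by linarith
    rw [← Real.log_neg_iff (by positivity), Real.log_mul (by positivity) (by positivity),
      Real.log_pow, Real.log_pow]
    linarith

namespace SimpleGraph

variable {α V : Type*} {H : SimpleGraph α} {G G' : SimpleGraph V}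

lemma Reachable.deleteEdges_of_induce_compl {v : α} {u w : ({v}ᶜ : Set α)}
    (h : (H.induce {v}ᶜ).Reachable u w) {e : Sym2 α} (hv : v ∈ e) :
    (H.deleteEdges {e}).Reachable u w :=
  h.map
    { toFun := Subtype.val
      map_rel' := fun {a b} hab => by
        refine ⟨hab, fun he => ?_⟩
        rw [fromEdgeSet_adj, Set.mem_singleton_iff] at he
        rcases Sym2.mem_iff.mp (he.1 ▸ hv) with h | h
        exacts [a.2 h.symm, b.2 h.symm] }

lemma Connected.of_forall_adj_reachable (hG : G.Connected)
    (h : ∀ u v, G.Adj u v → G'.Reachable u v) : G'.Connected := by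
  have hle : G.Reachable ≤ G'.Reachable := by
    simp only [reachable_eq_reflTransGen]
    exact Relation.reflTransGen_closed fun u v huv => reachable_eq_reflTransGen ▸ h u v huv
  have := hG.nonempty
  exact ⟨fun u v => hle u v (hG.preconnected u v)⟩

lemma Subgraph.coe_connected_of_spanningCoe_connected [Nontrivial V] {S : G.Subgraph}
    (h : S.spanningCoe.Connected) : S.coe.Connected := by
  have hspan : S.IsSpanning := fun v =>
    have ⟨_, hv⟩ := h.preconnected.exists_adj_of_nontrivial v
    S.edge_vert hv
  exact (S.spanningCoeEquivCoeOfSpanning hspan).connected_iff.mp h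

end SimpleGraph

section TwoConnected

variable {α : Type*} [Fintype α] {H : SimpleGraph α}

lemma TwoConnected.connected (hH : TwoConnected H) : H.Connected := by
  have : Nonempty α := Fintype.card_pos_iff.mp (by linarith [hH.1])
  refine ⟨fun u v => ?_⟩
  obtain ⟨w, hwu, hwv⟩ := Fintype.exists_ne_and_ne_of_two_lt_card hH.1 u v
  exact ((hH.2 w).preconnected ⟨u, hwu.symm⟩ ⟨v, hwv.symm⟩).map (Embedding.induce _).toHom

lemma TwoConnected.exists_adj (hH : TwoConnected H) (a : α) : ∃ b, H.Adj a b :=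
  have : Nontrivial α := Fintype.one_lt_card_iff_nontrivial.mp (by linarith [hH.1])
  hH.connected.preconnected.exists_adj_of_nontrivial a

lemma TwoConnected.not_isBridge (hH : TwoConnected H) {a b : α} (hab : H.Adj a b) :
    ¬ H.IsBridge s(a, b) := by
  obtain ⟨z, hza, hzb⟩ := Fintype.exists_ne_and_ne_of_two_lt_card hH.1 a b
  have hza' : (H.deleteEdges {s(a, b)}).Reachable z a :=
    ((hH.2 b).preconnected ⟨z, hzb⟩ ⟨a, hab.ne⟩).deleteEdges_of_induce_compl
      (Sym2.mem_mk_right a b)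
  have hzb' : (H.deleteEdges {s(a, b)}).Reachable z b :=
    ((hH.2 a).preconnected ⟨z, hza⟩ ⟨b, hab.ne.symm⟩).deleteEdges_of_induce_compl
      (Sym2.mem_mk_left a b)
  exact isBridge_iff.not_left.mpr (hza'.symm.trans hzb')

end TwoConnected

namespace SimpleGraph

variable {α V : Type*} {H : SimpleGraph α} {G : SimpleGraph V}

lemma Copy.toSubgraph_le_iff (f : Copy H G) (S : G.Subgraph) :
    f.toSubgraph ≤ S ↔ (∀ a, f a ∈ S.verts) ∧ ∀ a b, H.Adj a b → S.Adj (f a) (f b) := by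
  rw [Copy.toSubgraph, Subgraph.map_le_iff_le_comap]
  constructor
  · intro h
    exact ⟨fun a => h.1 (Set.mem_univ a), fun a b hab => (h.2 hab).2⟩
  · rintro ⟨hverts, hadj⟩
    exact ⟨fun a _ => hverts a, fun a b hab => ⟨hab, hadj a b hab⟩⟩

section ConnectedExtension

variable (hH₀ : ∀ a, ∃ b, H.Adj a b) (hH₁ : ∀ a b, H.Adj a b → ¬ H.IsBridge s(a, b))
include hH₀ hH₁

/-- `s(x, y)` is a bridge of `S ⊔ G.subgraphOfAdj hxy`, so the bridgeless copy cannot use it. -/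
lemma Copy.toSubgraph_le_of_le_sup_subgraphOfAdj (f : Copy H G) {S : G.Subgraph} {x y : V}
    (hxy : G.Adj x y) (hS : ¬ S.spanningCoe.Reachable x y)
    (hf : f.toSubgraph ≤ S ⊔ G.subgraphOfAdj hxy) : f.toSubgraph ≤ S := by
  have hS_adj : ∀ a b, H.Adj a b → s(f a, f b) ≠ s(x, y) → S.Adj (f a) (f b) := by
    intro a b hab hne
    have := ((f.toSubgraph_le_iff _).mp hf).2 a b hab
    simpa [Subgraph.sup_adj, subgraphOfAdj_adj, hne.symm] using this
  have h_adj : ∀ a b, H.Adj a b → S.Adj (f a) (f b) := by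
    intro a b hab
    by_contra hab'
    have hfab : s(f a, f b) = s(x, y) := by_contra fun hne => hab' (hS_adj a b hab hne)
    have hreach : (H.deleteEdges {s(a, b)}).Reachable a b :=
      not_not.mp (mt isBridge_iff.mpr (hH₁ a b hab))
    have hreach' := hreach.map (G' := S.spanningCoe)
      { toFun := f
        map_rel' := fun {u v} huv => by
          rw [deleteEdges_adj, Set.mem_singleton_iff] at huv
          refine hS_adj u v huv.1 fun h => huv.2 ?_
          exact Sym2.map.injective f.injective (by simpa [hfab] using h) }
    rcases Sym2.eq_iff.mp hfab with ⟨hx, hy⟩ | ⟨hx, hy⟩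
    · exact hS (hx ▸ hy ▸ hreach')
    · exact hS (hx ▸ hy ▸ hreach'.symm)
  refine (f.toSubgraph_le_iff S).mpr ⟨fun a => ?_, h_adj⟩
  obtain ⟨b, hab⟩ := hH₀ a
  exact S.edge_vert (h_adj a b hab)

lemma exists_connected_extension_without_new_copies [Finite V] (hG : G.Connected)
    (S : G.Subgraph) :
    ∃ S' : G.Subgraph, S ≤ S' ∧ S'.spanningCoe.Connected ∧
      ∀ f : Copy H G, f.toSubgraph ≤ S' → f.toSubgraph ≤ S := by
  induction S using WellFoundedGT.induction with
  | _ S ih =>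
  by_cases hcross : ∃ x y, ∃ hxy : G.Adj x y, ¬ S.spanningCoe.Reachable x y
  · obtain ⟨x, y, hxy, hS⟩ := hcross
    have hlt : S < S ⊔ G.subgraphOfAdj hxy := by
      refine left_lt_sup.mpr fun hle => hS (Adj.reachable ?_)
      exact hle.2 (by rw [subgraphOfAdj_adj])
    obtain ⟨S', hle, hconn, hcopy⟩ := ih _ hlt
    exact ⟨S', le_sup_left.trans hle, hconn, fun f hf =>
      f.toSubgraph_le_of_le_sup_subgraphOfAdj hH₀ hH₁ hxy hS (hcopy f hf)⟩
  · push Not at hcross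
    exact ⟨S, le_rfl, hG.of_forall_adj_reachable hcross, fun _ h => h⟩

end ConnectedExtension

noncomputable def Subgraph.vertEdgeFinset [Fintype V] (A : G.Subgraph) :
    Finset (V ⊕ Sym2 V) := by
  classical exact A.verts.toFinset.disjSum A.edgeSet.toFinset

@[simps]
def subgraphOfFinset (G : SimpleGraph V) (T : Finset (V ⊕ Sym2 V)) : G.Subgraph where
  verts := {v | .inl v ∈ T}
  Adj x y := G.Adj x y ∧ .inl x ∈ T ∧ .inl y ∈ T ∧ .inr s(x, y) ∈ T
  adj_sub h := h.1
  edge_vert h := h.2.1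
  symm := ⟨fun _ _ ⟨h, hx, hy, hxy⟩ => ⟨h.symm, hy, hx, Sym2.eq_swap ▸ hxy⟩⟩

section VertEdgeFinset

open scoped Classical

variable [Fintype V]

@[simp]
lemma Subgraph.inl_mem_vertEdgeFinset {A : G.Subgraph} {v : V} :
    .inl v ∈ A.vertEdgeFinset ↔ v ∈ A.verts := by
  simp [Subgraph.vertEdgeFinset]

@[simp]
lemma Subgraph.inr_mem_vertEdgeFinset {A : G.Subgraph} {e : Sym2 V} :
    .inr e ∈ A.vertEdgeFinset ↔ e ∈ A.edgeSet := by
  simp [Subgraph.vertEdgeFinset]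

lemma le_subgraphOfFinset_iff {A : G.Subgraph} {T : Finset (V ⊕ Sym2 V)} :
    A ≤ G.subgraphOfFinset T ↔ A.vertEdgeFinset ⊆ T := by
  constructor
  · rintro h (v | e) hz
    · exact h.1 (Subgraph.inl_mem_vertEdgeFinset.mp hz)
    · induction e using Sym2.ind with
      | _ x y => exact (h.2 (Subgraph.inr_mem_vertEdgeFinset.mp hz)).2.2.2
  · intro h
    refine ⟨fun v hv => h (Subgraph.inl_mem_vertEdgeFinset.mpr hv), fun x y hxy => ?_⟩
    exact ⟨A.adj_sub hxy, h (by simpa using A.edge_vert hxy),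
      h (by simpa using A.edge_vert hxy.symm), h (by simpa using hxy)⟩

@[simp]
lemma subgraphOfFinset_vertEdgeFinset (A : G.Subgraph) :
    G.subgraphOfFinset A.vertEdgeFinset = A := by
  refine le_antisymm ?_ (le_subgraphOfFinset_iff.mpr subset_rfl)
  exact ⟨fun v hv => by simpa using hv, fun x y hxy => by simpa using hxy.2.2.2⟩

lemma Subgraph.vertEdgeFinset_subset_vertEdgeFinset_iff {A B : G.Subgraph} :
    A.vertEdgeFinset ⊆ B.vertEdgeFinset ↔ A ≤ B := by
  rw [← le_subgraphOfFinset_iff, subgraphOfFinset_vertEdgeFinset]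

lemma two_pow_card_le_mul_card_separating_finsets {A B : G.Subgraph} (h : ¬ B ≤ A) :
    2 ^ Fintype.card (V ⊕ Sym2 V) ≤ 2 ^ (#A.vertEdgeFinset + 1) *
      #{T | A ≤ G.subgraphOfFinset T ∧ ¬ B ≤ G.subgraphOfFinset T} := by
  rw [← Subgraph.vertEdgeFinset_subset_vertEdgeFinset_iff, not_subset] at h
  obtain ⟨z, hzB, hzA⟩ := h
  rw [two_pow_card_eq_mul_card_Icc_erase hzA]
  refine Nat.mul_le_mul_left _ (card_le_card fun T hT => ?_)
  rw [mem_Icc] at hT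
  simp only [mem_filter, mem_univ, true_and, le_subgraphOfFinset_iff]
  exact ⟨hT.1, fun hB => by simpa using hT.2 (hB hzB)⟩

lemma Copy.card_vertEdgeFinset_toSubgraph (f : Copy H G) :
    #f.toSubgraph.vertEdgeFinset = Nat.card α + Nat.card H.edgeSet := by
  rw [Subgraph.vertEdgeFinset, card_disjSum, Set.toFinset_card, Set.toFinset_card,
    ← Nat.card_eq_fintype_card, ← Nat.card_eq_fintype_card]
  simp only [Copy.toSubgraph, Subgraph.map_verts, Subgraph.verts_top, Set.image_univ,
    Subgraph.edgeSet_map, Subgraph.edgeSet_top]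
  rw [Nat.card_range_of_injective f.injective,
    Nat.card_image_of_injective (Sym2.map.injective f.injective)]

lemma Copy.toSubgraph_eq_of_le_s9 {f g : Copy H G} (h : f.toSubgraph ≤ g.toSubgraph) :
    f.toSubgraph = g.toSubgraph := by
  rw [← Subgraph.vertEdgeFinset_subset_vertEdgeFinset_iff] at h
  have := eq_of_subset_of_card_le h <| by
    rw [card_vertEdgeFinset_toSubgraph, card_vertEdgeFinset_toSubgraph]
  rw [← subgraphOfFinset_vertEdgeFinset f.toSubgraph, this, subgraphOfFinset_vertEdgeFinset]

lemma Copy.inv_two_pow_mul_card_le_card_separating_finsets {f g : Copy H G}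
    (hfg : f.toSubgraph ≠ g.toSubgraph) :
    (2 ^ (Nat.card α + Nat.card H.edgeSet + 1) : ℝ)⁻¹ * Fintype.card (Finset (V ⊕ Sym2 V)) ≤
      #{T | f.toSubgraph ≤ G.subgraphOfFinset T ∧ ¬ g.toSubgraph ≤ G.subgraphOfFinset T} := by
  have := two_pow_card_le_mul_card_separating_finsets fun h =>
    hfg (Copy.toSubgraph_eq_of_le_s9 h).symm
  rw [f.card_vertEdgeFinset_toSubgraph] at this
  rw [Fintype.card_finset, inv_mul_le_iff₀ (by positivity)]
  exact_mod_cast this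

end VertEdgeFinset

lemma copyCount_le_card_pow [Fintype α] [Fintype V] :
    G.copyCount H ≤ Fintype.card V ^ Fintype.card α := by
  classical
  refine copyCount_le_labelledCopyCount.trans ?_
  rw [labelledCopyCount, ← Fintype.card_fun]
  convert Fintype.card_le_of_injective _ (DFunLike.coe_injective (F := Copy H G))

lemma exists_finsets_separating_copies [Fintype V] (m : ℕ)
    (hm : (G.copyCount H : ℝ) ^ 2 *
      (1 - (2 ^ (Nat.card α + Nat.card H.edgeSet + 1) : ℝ)⁻¹) ^ m < 1) :
    ∃ T : Fin m → Finset (V ⊕ Sym2 V), ∀ f g : Copy H G, f.toSubgraph ≠ g.toSubgraph →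
      ∃ i, f.toSubgraph ≤ G.subgraphOfFinset (T i) ∧
        ¬ g.toSubgraph ≤ G.subgraphOfFinset (T i) := by
  classical
  let copies : Finset G.Subgraph := {A | Nonempty (H ≃g A.coe)}
  have mem_copies (f : Copy H G) : f.toSubgraph ∈ copies := by
    simpa [copies] using ⟨f.isoToSubgraph⟩
  have hgood : ∀ p ∈ copies.offDiag, (2 ^ (Nat.card α + Nat.card H.edgeSet + 1) : ℝ)⁻¹ *
      Fintype.card (Finset (V ⊕ Sym2 V)) ≤
        #{T | p.1 ≤ G.subgraphOfFinset T ∧ ¬ p.2 ≤ G.subgraphOfFinset T} := by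
    rintro ⟨A, B⟩ hAB
    obtain ⟨hA, hB, hne⟩ := mem_offDiag.mp hAB
    obtain ⟨f, rfl⟩ : A ∈ Set.range Copy.toSubgraph := by
      rw [Copy.range_toSubgraph]; simpa [copies] using hA
    obtain ⟨g, rfl⟩ : B ∈ Set.range Copy.toSubgraph := by
      rw [Copy.range_toSubgraph]; simpa [copies] using hB
    exact Copy.inv_two_pow_mul_card_le_card_separating_finsets hne
  have hq : (0 : ℝ) ≤ 1 - (2 ^ (Nat.card α + Nat.card H.edgeSet + 1) : ℝ)⁻¹ :=
    sub_nonneg.mpr (inv_le_one_of_one_le₀ (one_le_pow₀ one_le_two))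
  have hcard : (#copies.offDiag : ℝ) ≤ G.copyCount H ^ 2 := by
    rw [offDiag_card, sq]
    exact_mod_cast Nat.sub_le _ _
  obtain ⟨T, hT⟩ := copies.offDiag.exists_forall_exists_of_card_mul_pow_lt _ m hgood
    ((mul_le_mul_of_nonneg_right hcard (pow_nonneg hq m)).trans_lt hm)
  exact ⟨T, fun f g hfg => hT (f.toSubgraph, g.toSubgraph)
    (mem_offDiag.mpr ⟨mem_copies f, mem_copies g, hfg⟩)⟩

lemma exists_connected_finset_stronglySeparatesCopies [Fintype α] [Fintype V] [Nontrivial V]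
    (hH : TwoConnected H) (hG : G.Connected) (m : ℕ)
    (hm : (G.copyCount H : ℝ) ^ 2 *
      (1 - (2 ^ (Nat.card α + Nat.card H.edgeSet + 1) : ℝ)⁻¹) ^ m < 1) :
    ∃ F : Finset G.Subgraph, #F ≤ m ∧ (∀ A ∈ F, A.coe.Connected) ∧
      StronglySeparatesCopies H G F := by
  classical
  obtain ⟨T, hT⟩ := exists_finsets_separating_copies m hm
  choose S hTS hS_conn hS_copy using fun i =>
    exists_connected_extension_without_new_copies hH.exists_adj (fun _ _ => hH.not_isBridge) hG
      (G.subgraphOfFinset (T i))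
  refine ⟨univ.image S, card_image_le.trans (by simp), ?_, ?_⟩
  · simpa using fun i => Subgraph.coe_connected_of_spanningCoe_connected (hS_conn i)
  · rintro H₁ H₂ ⟨e₁⟩ ⟨e₂⟩ hne
    obtain ⟨f₁, rfl⟩ : H₁ ∈ Set.range Copy.toSubgraph := by
      rw [Copy.range_toSubgraph]; exact ⟨e₁.symm⟩
    obtain ⟨f₂, rfl⟩ : H₂ ∈ Set.range Copy.toSubgraph := by
      rw [Copy.range_toSubgraph]; exact ⟨e₂.symm⟩
    obtain ⟨i, hi₁, hi₂⟩ := hT f₁ f₂ hne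
    obtain ⟨j, hj₂, hj₁⟩ := hT f₂ f₁ hne.symm
    exact ⟨S i, by simp, S j, by simp, hi₁.trans (hTS i), fun h => hi₂ (hS_copy i f₂ h),
      hj₂.trans (hTS j), fun h => hj₁ (hS_copy j f₁ h)⟩

end SimpleGraph

/-- For every 2-connected graph `H` there is a constant `C_H > 0` such that every
connected graph `G` on `n ≥ 2` vertices admits a family of at most `C_H·log n` connected
subgraphs that strongly separates the copies of `H` in `G`. -/
theorem copy_separation_by_connected_subgraphs_of_twoConnected
    (α : Type) [Fintype α] (H : SimpleGraph α) (hH : TwoConnected H) :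
    ∃ C : ℝ, 0 < C ∧
      ∀ (V : Type) [Fintype V] (G : SimpleGraph V), G.Connected → 2 ≤ Fintype.card V →
        ∃ F : Set G.Subgraph,
          F.Finite ∧
          (∀ A ∈ F, A.coe.Connected) ∧
          (F.ncard : ℝ) ≤ C * Real.log (Fintype.card V) ∧
          StronglySeparatesCopies H G F := by
  set q : ℝ := 1 - (2 ^ (Nat.card α + Nat.card H.edgeSet + 1) : ℝ)⁻¹
  have hq₀ : 0 < q := sub_pos.mpr (inv_lt_one_of_one_lt₀ (one_lt_pow₀ one_lt_two (by omega)))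
  obtain ⟨C, hC, hCm⟩ :=
    Real.exists_pos_forall_exists_le_mul_log_and_pow_mul_pow_lt_one hq₀
      (sub_lt_self _ (by positivity)) (Fintype.card α * 2)
  refine ⟨C, hC, fun V _ G hG hn => ?_⟩
  have : Nontrivial V := Fintype.one_lt_card_iff_nontrivial.mp hn
  obtain ⟨m, hmC, hm⟩ := hCm (Fintype.card V) (by exact_mod_cast hn)
  have hcopies : (G.copyCount H : ℝ) ^ 2 ≤ (Fintype.card V : ℝ) ^ (Fintype.card α * 2) := by
    rw [pow_mul]
    exact_mod_cast Nat.pow_le_pow_left (copyCount_le_card_pow (G := G) (H := H)) 2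
  obtain ⟨F, hFm, hF_conn, hF_sep⟩ := exists_connected_finset_stronglySeparatesCopies hH hG m
    ((mul_le_mul_of_nonneg_right hcopies (pow_nonneg hq₀.le m)).trans_lt hm)
  refine ⟨F, F.finite_toSet, hF_conn, ?_, hF_sep⟩
  rw [Set.ncard_coe_finset]
  exact (Nat.cast_le.mpr hFm).trans hmC
end

section
/- Let H be a connected graph with at least one edge. Every graph G on n vertices admits a family F of connected subgraphs of G, each containing a copy of H, with |F| ≤ 2n², such that F strongly separates the copies of H in G; such a family is given by taking, for each edge e of G, those connected components of G − e that contain a copy of H. -/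
/-!
If `H₁ ≠ H₂` are copies of `H`, they have the same number of edges and no isolated vertices, so
some edge `xy` of `H₂` is not an edge of `H₁`. The connected copy `H₁` survives in `G - xy` and
lies in one of its components, which cannot contain `H₂`. A component of `G - xy` that contains
neither `x` nor `y` is a component of `G`, so over all edges these components number at most
`n + n²`.
-/

open SimpleGraph

namespace SimpleGraph

variable {V : Type*} {G K : SimpleGraph V}

namespace ConnectedComponent

def toSubgraphOfLE (h : K ≤ G) (C : K.ConnectedComponent) : G.Subgraph :=
  (SimpleGraph.toSubgraph K h).induce C.supp

variable (h : K ≤ G) (C : K.ConnectedComponent)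

@[simp] lemma toSubgraphOfLE_adj {u v : V} :
    (C.toSubgraphOfLE h).Adj u v ↔ u ∈ C.supp ∧ v ∈ C.supp ∧ K.Adj u v := Iff.rfl

lemma connected_toSubgraphOfLE : (C.toSubgraphOfLE h).Connected := by
  have hcoe : (C.toSubgraphOfLE h).coe = C.toSimpleGraph := by
    ext ⟨u, hu⟩ ⟨v, hv⟩
    exact ⟨fun huv => huv.2.2, fun huv => ⟨hu, hv, huv⟩⟩
  exact ⟨hcoe ▸ C.connected_toSimpleGraph⟩

lemma le_toSubgraphOfLE {B : G.Subgraph} (hB : B.Connected)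
    (hBK : ∀ ⦃u v⦄, B.Adj u v → K.Adj u v) {v : V} (hv : v ∈ B.verts) :
    B ≤ (K.connectedComponentMk v).toSubgraphOfLE h := by
  have hverts : B.verts ⊆ (K.connectedComponentMk v).supp := fun w hw =>
    ConnectedComponent.sound ((hB ⟨w, hw⟩ ⟨v, hv⟩).map ⟨Subtype.val, fun huv => hBK huv⟩)
  exact ⟨hverts, fun u w huw =>
    ⟨hverts (B.edge_vert huw), hverts (B.edge_vert huw.symm), hBK huw⟩⟩

lemma toSubgraphOfLE_eq_toSubgraph
    (hC : ∀ u ∈ C.supp, ∀ w, G.Adj u w → K.Adj u w) {v : V} (hv : v ∈ C.supp) :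
    C.toSubgraphOfLE h = (G.connectedComponentMk v).toSubgraph := by
  have hsupp : C.supp = (G.connectedComponentMk v).supp := by
    ext w
    refine ⟨fun hw => ?_, fun hw => ?_⟩
    · exact ConnectedComponent.sound ((ConnectedComponent.exact (hw.trans hv.symm)).mono h)
    · exact (ConnectedComponent.exact hw).symm.mem_subgraphVerts (H := C.toSubgraphOfLE h)
        (fun u hu w huw => ⟨hu, C.mem_supp_of_adj_mem_supp hu (hC u hu w huw), hC u hu w huw⟩) hv
  refine Subgraph.ext hsupp ?_
  ext u w
  simp only [toSubgraphOfLE_adj, Subgraph.induce_adj, Subgraph.top_adj, ← hsupp]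
  exact ⟨fun ⟨hu, hw, huw⟩ => ⟨hu, hw, h huw⟩, fun ⟨hu, hw, huw⟩ => ⟨hu, hw, hC u hu w huw⟩⟩

end ConnectedComponent

def edgeDeletionComponents (G : SimpleGraph V) : Set G.Subgraph :=
  {A | ∃ e ∈ G.edgeSet, ∃ C : (G.deleteEdges {e}).ConnectedComponent,
    C.toSubgraphOfLE (G.deleteEdges_le _) = A}

lemma connected_of_mem_edgeDeletionComponents {A : G.Subgraph}
    (hA : A ∈ G.edgeDeletionComponents) : A.Connected := by
  obtain ⟨e, -, C, rfl⟩ := hA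
  exact C.connected_toSubgraphOfLE _

lemma edgeDeletionComponents_subset :
    G.edgeDeletionComponents ⊆ Set.range (fun v => (G.connectedComponentMk v).toSubgraph) ∪
      Set.range (fun p : V × V => ((G.deleteEdges {s(p.1, p.2)}).connectedComponentMk p.1
        ).toSubgraphOfLE (G.deleteEdges_le _)) := by
  rintro A ⟨e, -, C, rfl⟩
  induction e using Sym2.ind with | _ x y => ?_
  by_cases hx : x ∈ C.supp
  · exact Or.inr ⟨(x, y), congrArg _ hx⟩
  by_cases hy : y ∈ C.supp
  · refine Or.inr ⟨(y, x), ?_⟩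
    dsimp only
    rw [show s(y, x) = s(x, y) from Sym2.eq_swap]
    exact congrArg _ hy
  induction C using ConnectedComponent.ind with | h v => ?_
  have hclosed : ∀ u ∈ ((G.deleteEdges {s(x, y)}).connectedComponentMk v).supp, ∀ w,
      G.Adj u w → (G.deleteEdges {s(x, y)}).Adj u w := by
    intro u hu w huw
    refine deleteEdges_adj.mpr ⟨huw, fun he => ?_⟩
    rw [Set.mem_singleton_iff, Sym2.eq_iff] at he
    rcases he with ⟨rfl, -⟩ | ⟨rfl, -⟩
    exacts [hx hu, hy hu]
  exact Or.inl ⟨v, (ConnectedComponent.toSubgraphOfLE_eq_toSubgraph _ _ hclosed rfl).symm⟩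

lemma ncard_edgeDeletionComponents_le [Fintype V] :
    G.edgeDeletionComponents.ncard ≤ 2 * Fintype.card V ^ 2 := by
  calc G.edgeDeletionComponents.ncard
      ≤ (Set.range (fun v => (G.connectedComponentMk v).toSubgraph) ∪
          Set.range (fun p : V × V => ((G.deleteEdges {s(p.1, p.2)}).connectedComponentMk p.1
            ).toSubgraphOfLE (G.deleteEdges_le _))).ncard :=
        Set.ncard_le_ncard edgeDeletionComponents_subset (Set.toFinite _)
    _ ≤ Nat.card V + Nat.card (V × V) :=
        (Set.ncard_union_le _ _).trans <| add_le_add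
          ((Nat.card_coe_set_eq _).symm.trans_le (Finite.card_range_le _))
          ((Nat.card_coe_set_eq _).symm.trans_le (Finite.card_range_le _))
    _ ≤ 2 * Fintype.card V ^ 2 := by
      rw [Nat.card_prod, Nat.card_eq_fintype_card]
      nlinarith

lemma exists_mem_edgeDeletionComponents_le_not_le {B₁ B₂ : G.Subgraph} (hB₁ : B₁.Connected)
    {e : Sym2 V} (he₂ : e ∈ B₂.edgeSet) (he₁ : e ∉ B₁.edgeSet) :
    ∃ A ∈ G.edgeDeletionComponents, B₁ ≤ A ∧ ¬ B₂ ≤ A := by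
  induction e using Sym2.ind with | _ x y => ?_
  obtain ⟨v, hv⟩ := hB₁.nonempty
  have hB₁K : ∀ ⦃u w⦄, B₁.Adj u w → (G.deleteEdges {s(x, y)}).Adj u w := fun u w huw =>
    deleteEdges_adj.mpr ⟨B₁.adj_sub huw, fun h => he₁ (Set.mem_singleton_iff.mp h ▸ huw)⟩
  refine ⟨_, ⟨s(x, y), B₂.edgeSet_subset he₂, _, rfl⟩,
    ConnectedComponent.le_toSubgraphOfLE _ hB₁ hB₁K hv, fun hle => ?_⟩
  exact deleteEdges_adj.mp (hle.2 he₂).2.2 |>.2 rfl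

namespace Subgraph

lemma ncard_edgeSet_eq_of_iso {α : Type*} {H : SimpleGraph α} {B : G.Subgraph}
    (e : B.coe ≃g H) : B.edgeSet.ncard = H.edgeSet.ncard := by
  rw [← B.image_coe_edgeSet_coe, Set.ncard_image_of_injective _
    (Sym2.map.injective Subtype.val_injective), ← Nat.card_coe_set_eq, ← Nat.card_coe_set_eq]
  exact Nat.card_congr e.mapEdgeSet

lemma verts_subset_support_of_iso {α : Type*} {H : SimpleGraph α} (hH : H.Connected)
    (hHe : H.edgeSet.Nonempty) {B : G.Subgraph} (e : B.coe ≃g H) : B.verts ⊆ B.support := by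
  obtain ⟨⟨x, y⟩, hxy⟩ := hHe
  have : Nontrivial α := hxy.nontrivial
  have : Nontrivial B.verts := e.toEquiv.nontrivial
  have hB : B.Connected := ⟨e.connected_iff.mpr hH⟩
  exact fun v hv => hB.preconnected.exists_adj_of_nontrivial ⟨v, hv⟩

lemma eq_of_edgeSet_subset_of_ncard_le [Finite V] {B₁ B₂ : G.Subgraph}
    (h : B₂.edgeSet ⊆ B₁.edgeSet) (hcard : B₁.edgeSet.ncard ≤ B₂.edgeSet.ncard)
    (h₁ : B₁.verts ⊆ B₁.support) (h₂ : B₂.verts ⊆ B₂.support) : B₁ = B₂ := by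
  have hedge : B₁.edgeSet = B₂.edgeSet := (Set.eq_of_subset_of_ncard_le h hcard).symm
  have hadj : B₁.Adj = B₂.Adj := by
    ext u v
    rw [← Subgraph.mem_edgeSet, ← Subgraph.mem_edgeSet, hedge]
  have hsupp : B₁.support = B₂.support := by
    ext v
    simp only [mem_support, hadj]
  refine Subgraph.ext ?_ hadj
  rw [(B₁.support_subset_verts.antisymm h₁).symm.trans hsupp, B₂.support_subset_verts.antisymm h₂]

lemma exists_mem_edgeSet_not_mem_of_iso [Finite V] {α : Type*} {H : SimpleGraph α}
    (hH : H.Connected) (hHe : H.edgeSet.Nonempty) {B₁ B₂ : G.Subgraph}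
    (e₁ : B₁.coe ≃g H) (e₂ : B₂.coe ≃g H) (hne : B₁ ≠ B₂) :
    ∃ e ∈ B₂.edgeSet, e ∉ B₁.edgeSet := by
  by_contra! hsub
  refine hne (eq_of_edgeSet_subset_of_ncard_le hsub ?_ (verts_subset_support_of_iso hH hHe e₁)
    (verts_subset_support_of_iso hH hHe e₂))
  rw [ncard_edgeSet_eq_of_iso e₁, ncard_edgeSet_eq_of_iso e₂]

end Subgraph

end SimpleGraph

theorem copy_separation_by_connected_subgraphs_general
    (α : Type) (H : SimpleGraph α) (hHc : H.Connected)
    (hHe : H.edgeSet.Nonempty)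
    (V : Type) [Fintype V] (G : SimpleGraph V) :
    ∃ F : Set G.Subgraph,
      F.Finite ∧
      (∀ A ∈ F, A.coe.Connected ∧ ∃ H₁ : G.Subgraph, H₁ ≤ A ∧ Nonempty (H₁.coe ≃g H)) ∧
      F.ncard ≤ 2 * (Fintype.card V) ^ 2 ∧
      StronglySeparatesCopies H G F := by
  set F := {A ∈ G.edgeDeletionComponents | ∃ B ≤ A, Nonempty (B.coe ≃g H)}
  have separate (B₁ B₂ : G.Subgraph) (e₁ : B₁.coe ≃g H) (e₂ : B₂.coe ≃g H) (hne : B₁ ≠ B₂) :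
      ∃ A ∈ F, B₁ ≤ A ∧ ¬ B₂ ≤ A := by
    obtain ⟨e, he₂, he₁⟩ := Subgraph.exists_mem_edgeSet_not_mem_of_iso hHc hHe e₁ e₂ hne
    obtain ⟨A, hA, hle, hnle⟩ :=
      exists_mem_edgeDeletionComponents_le_not_le ⟨e₁.connected_iff.mpr hHc⟩ he₂ he₁
    exact ⟨A, ⟨hA, B₁, hle, ⟨e₁⟩⟩, hle, hnle⟩
  refine ⟨F, Set.toFinite F, ?_, ?_, ?_⟩
  · rintro A ⟨hA, hcopy⟩
    exact ⟨(connected_of_mem_edgeDeletionComponents hA).coe, hcopy⟩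
  · exact (Set.ncard_le_ncard (Set.sep_subset _ _) (Set.toFinite _)).trans
      ncard_edgeDeletionComponents_le
  · rintro B₁ B₂ ⟨e₁⟩ ⟨e₂⟩ hne
    obtain ⟨F₁, hF₁, hle₁, hnle₁⟩ := separate B₁ B₂ e₁ e₂ hne
    obtain ⟨F₂, hF₂, hle₂, hnle₂⟩ := separate B₂ B₁ e₂ e₁ hne.symm
    exact ⟨F₁, hF₁, F₂, hF₂, hle₁, hnle₁, hle₂, hnle₂⟩

/-- For every connected graph `H` with at least one edge, every graph `G` on `n` vertices
admits a family of at most `2n²` connected subgraphs, each containing a copy of `H`, that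
strongly separates the copies of `H` in `G`. -/
theorem copy_separation_by_connected_subgraphs
    (α : Type) [Fintype α] (H : SimpleGraph α) (hHc : H.Connected)
    (hHe : H.edgeSet.Nonempty)
    (V : Type) [Fintype V] (G : SimpleGraph V) :
    ∃ F : Set G.Subgraph,
      F.Finite ∧
      (∀ A ∈ F, A.coe.Connected ∧ ∃ H₁ : G.Subgraph, H₁ ≤ A ∧ Nonempty (H₁.coe ≃g H)) ∧
      F.ncard ≤ 2 * (Fintype.card V) ^ 2 ∧
      StronglySeparatesCopies H G F :=
  copy_separation_by_connected_subgraphs_general α H hHc hHe V G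
end
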